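/- arXiv:2105.12184 — 5 statements merged into one kernel-verified Lean document; each statement's English description precedes it below -/
import Mathlib

section
/- For every finite alphabet Σ and every finite integer k ≥ 0 there exists a finite bound T = T(|Σ|, k) such that every set S of k finite words over Σ admits a d-parameter envelope with d ≤ T; that is, there exists a d-parameter word W with d ≤ T and a set S' of words over Σ with W(S') = S. -/
/-- `W` is a `k`-parameter word over the alphabet `σ` (letters are `Sum.inl`, parameters
`λ_i` are `Sum.inr i`): all parameters are among `λ_0, …, λ_{k-1}`, every such parameter
occurs, and before every occurrence of `λ_j` there is an occurrence of `λ_i` for all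
`i < j` (equivalently, first occurrences of parameters come in increasing order).
A `0`-parameter word is just a word over `σ`. -/
def IsPWord {σ : Type} (k : ℕ) (W : List (σ ⊕ ℕ)) : Prop :=
  (∀ i : ℕ, Sum.inr i ∈ W → i < k) ∧
  (∀ i : ℕ, i < k → Sum.inr i ∈ W) ∧
  (∀ i j : ℕ, i < j → ∀ p : Fin W.length, W.get p = Sum.inr j →
    ∃ q : Fin W.length, q < p ∧ W.get q = Sum.inr i)

/-- Substitution `W(U)`: replace each occurrence of the parameter `λ_i` in `W` by `U_i`
and truncate just before the first occurrence of a parameter `λ_i` with `i ≥ |U|`. -/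
def subst {σ : Type} (W U : List (σ ⊕ ℕ)) : List (σ ⊕ ℕ) :=
  (W.takeWhile fun a =>
    match a with
    | Sum.inl _ => true
    | Sum.inr i => decide (i < U.length)).map fun a =>
      match a with
      | Sum.inl s => Sum.inl s
      | Sum.inr i => U.getD i (Sum.inr 0)

/-- `W` is a `d`-parameter envelope of `S` with embedding type `S'`: `W(S') = S`,
where `S'` is a set of words over `σ` of length at most `d`. -/
def IsEnvelopeOf {σ : Type} [DecidableEq σ] (d : ℕ) (W : List (σ ⊕ ℕ))
    (S S' : Finset (List (σ ⊕ ℕ))) : Prop :=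
  IsPWord d W ∧ (∀ w ∈ S', IsPWord 0 w ∧ w.length ≤ d) ∧ S'.image (subst W) = S

/-!
Read `S` column by column: position `p` carries the column `(w[p]?)_{w ∈ S}`. A position whose
column is one letter for all words becomes that letter of the envelope; every other position
becomes a parameter, positions with equal columns sharing one parameter, numbered in the order
of their first occurrences (which makes the envelope a parameter word). A word `w` is recovered
by substituting its letters at these first occurrences. At position `|w|` the column is `none`
at `w`, so its first occurrence lies beyond `w`; hence its parameter is not covered by the
substituted word, which is exactly where `subst` truncates. Since the words of `S` have no
parameters, columns take at most `(|σ| + 1) ^ |S|` values, which bounds the number of parameters.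
-/

theorem List.Pairwise.lt_length_takeWhile_lt_iff {α : Type*} [LinearOrder α] {l : List α}
    (hl : l.Pairwise (· ≤ ·)) {a : α} {i : ℕ} (hi : i < l.length) :
    i < (l.takeWhile (· < a)).length ↔ l[i] < a := by
  simp only [takeWhile_eq_take_findIdx_not, List.length_take, lt_min_iff, hi, and_true,
    List.lt_findIdx_iff, Bool.not_eq_false', decide_eq_true_eq, exists_true_left]
  refine ⟨fun h => h i le_rfl, fun h j hj => ?_⟩
  rcases hj.lt_or_eq with hj | rfl
  · exact (List.pairwise_iff_getElem.1 hl j i _ hi hj).trans_lt h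
  · exact h

open List

namespace ParamWord

variable {σ : Type}

theorem isPWord_zero_iff {w : List (σ ⊕ ℕ)} : IsPWord 0 w ↔ ∀ i, Sum.inr i ∉ w := by
  refine ⟨fun h i hi => Nat.not_lt_zero i (h.1 i hi), fun h => ?_⟩
  refine ⟨fun i hi => absurd hi (h i), fun i hi => absurd hi (Nat.not_lt_zero i),
    fun i j _ p hp => absurd (hp ▸ w.get_mem p) (h j)⟩

theorem IsPWord.map_inl_bind_getLeft? {w : List (σ ⊕ ℕ)} (hw : IsPWord 0 w) (p : ℕ) :
    (w[p]?.bind Sum.getLeft?).map Sum.inl = w[p]? := by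
  rcases h : w[p]? with _ | _ | i
  · rfl
  · rfl
  · exact absurd (mem_of_getElem? h) (isPWord_zero_iff.1 hw i)

/-- `none` marks the parameters at which `subst` truncates. -/
def substLetter (U : List (σ ⊕ ℕ)) : σ ⊕ ℕ → Option (σ ⊕ ℕ)
  | Sum.inl s => some (Sum.inl s)
  | Sum.inr i => U[i]?

theorem subst_nil (U : List (σ ⊕ ℕ)) : subst [] U = [] := rfl

theorem subst_cons (a : σ ⊕ ℕ) (W U : List (σ ⊕ ℕ)) :
    subst (a :: W) U = ((substLetter U a).map (· :: subst W U)).getD [] := by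
  rcases a with s | i
  · simp [subst, substLetter]
  · by_cases hi : i < U.length <;> simp [subst, substLetter, hi]

theorem subst_eq_of_forall_getElem? {W U w : List (σ ⊕ ℕ)}
    (h : ∀ p : ℕ, W[p]?.bind (substLetter U) = w[p]?) : subst W U = w := by
  induction W generalizing w with
  | nil => simpa [subst_nil, eq_comm] using List.ext_getElem? fun p => (h p).symm
  | cons a W ih =>
    have h0 : substLetter U a = w[0]? := by simpa using h 0
    rcases w with _ | ⟨b, w⟩
    · simp [subst_cons, h0]
    · simp [subst_cons, h0, ih fun p => by simpa using h (p + 1)]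

open scoped Classical

def column {α : Type*} (S : Finset (List α)) (p : ℕ) : S → Option α := fun w => w.1[p]?

def IsLetterColumn (S : Finset (List (σ ⊕ ℕ))) (p : ℕ) : Prop :=
  ∃ s : σ, ∀ w, column S p w = some (Sum.inl s)

noncomputable def paramPositions (S : Finset (List (σ ⊕ ℕ))) : List ℕ :=
  (range (S.sup length)).filter fun p =>
    ¬ IsLetterColumn S p ∧ ∀ q < p, column S q ≠ column S p

noncomputable def paramIndex (S : Finset (List (σ ⊕ ℕ))) (p : ℕ) : ℕ :=
  (paramPositions S).findIdx fun q => column S q = column S p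

noncomputable def envelope (S : Finset (List (σ ⊕ ℕ))) : List (σ ⊕ ℕ) :=
  (range (S.sup length)).map fun p =>
    if h : IsLetterColumn S p then Sum.inl h.choose else Sum.inr (paramIndex S p)

noncomputable def embeddingWord (S : Finset (List (σ ⊕ ℕ))) (w : List (σ ⊕ ℕ)) :
    List (σ ⊕ ℕ) :=
  ((paramPositions S).takeWhile (· < w.length)).map fun q => w.getD q (Sum.inr 0)

variable {S : Finset (List (σ ⊕ ℕ))}

theorem mem_paramPositions {q : ℕ} : q ∈ paramPositions S ↔
    q < S.sup length ∧ ¬ IsLetterColumn S q ∧ ∀ r < q, column S r ≠ column S q := by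
  simp [paramPositions]

theorem pairwise_paramPositions :
    (paramPositions S).Pairwise fun p q => p < q ∧ column S p ≠ column S q :=
  pairwise_filter.2 <| (pairwise_lt_range).imp fun hpq _ hq =>
    ⟨hpq, (of_decide_eq_true hq).2 _ hpq⟩

theorem isLetterColumn_congr {p q : ℕ} (h : column S p = column S q) :
    IsLetterColumn S p ↔ IsLetterColumn S q := by
  rw [IsLetterColumn, IsLetterColumn, h]

theorem exists_mem_paramPositions {p : ℕ} (hp : p < S.sup length) (hl : ¬ IsLetterColumn S p) :
    ∃ q ∈ paramPositions S, column S q = column S p := by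
  have hex : ∃ q, column S q = column S p := ⟨p, rfl⟩
  have hle : Nat.find hex ≤ p := Nat.find_min' hex rfl
  refine ⟨Nat.find hex, mem_paramPositions.2 ⟨hle.trans_lt hp, ?_, ?_⟩, Nat.find_spec hex⟩
  · rwa [isLetterColumn_congr (Nat.find_spec hex)]
  · exact fun r hr hrq => Nat.find_min hex hr (hrq.trans (Nat.find_spec hex))

theorem paramIndex_lt_length {p : ℕ} (hp : p < S.sup length) (hl : ¬ IsLetterColumn S p) :
    paramIndex S p < (paramPositions S).length := by
  obtain ⟨q, hq, hcol⟩ := exists_mem_paramPositions hp hl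
  exact findIdx_lt_length.2 ⟨q, hq, decide_eq_true hcol⟩

theorem column_getElem_paramIndex {p : ℕ} (h : paramIndex S p < (paramPositions S).length) :
    column S (paramPositions S)[paramIndex S p] = column S p :=
  of_decide_eq_true (findIdx_getElem (w := h))

theorem getElem_paramIndex_le {p : ℕ} (h : paramIndex S p < (paramPositions S).length) :
    (paramPositions S)[paramIndex S p] ≤ p := by
  by_contra! hlt
  exact (mem_paramPositions.1 (getElem_mem h)).2.2 p hlt (column_getElem_paramIndex h).symm

theorem paramIndex_getElem {i : ℕ} (hi : i < (paramPositions S).length) :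
    paramIndex S (paramPositions S)[i] = i :=
  (findIdx_eq hi).2 ⟨decide_eq_true rfl, fun j hji => decide_eq_false
    (pairwise_iff_getElem.1 pairwise_paramPositions j i _ hi hji).2⟩

theorem length_envelope : (envelope S).length = S.sup length := by
  simp [envelope]

theorem getElem_envelope {p : ℕ} (hp : p < (envelope S).length) :
    (envelope S)[p] = if h : IsLetterColumn S p then Sum.inl h.choose
      else Sum.inr (paramIndex S p) := by
  simp [envelope]

theorem getElem_envelope_paramPositions {i : ℕ} (hi : i < (paramPositions S).length) :
    (envelope S)[(paramPositions S)[i]]'(length_envelope ▸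
      (mem_paramPositions.1 (getElem_mem hi)).1) = Sum.inr i := by
  rw [getElem_envelope, dif_neg (mem_paramPositions.1 (getElem_mem hi)).2.1,
    paramIndex_getElem hi]

theorem isPWord_envelope : IsPWord (paramPositions S).length (envelope S) := by
  refine ⟨fun i hi => ?_, fun i hi => ?_, fun i j hij p hp => ?_⟩
  · obtain ⟨p, hp, he⟩ := getElem_of_mem hi
    rw [getElem_envelope] at he
    split_ifs at he with hl
    cases he
    exact paramIndex_lt_length (length_envelope ▸ hp) hl
  · exact getElem_envelope_paramPositions hi ▸ getElem_mem _
  · rw [List.get_eq_getElem, getElem_envelope] at hp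
    split_ifs at hp with hl
    cases hp
    have hj := paramIndex_lt_length (length_envelope ▸ p.2) hl
    have hi := hij.trans hj
    refine ⟨⟨(paramPositions S)[i], length_envelope ▸ (mem_paramPositions.1 (getElem_mem hi)).1⟩,
      ?_, getElem_envelope_paramPositions hi⟩
    exact ((pairwise_iff_getElem.1 pairwise_paramPositions i _ hi hj hij).1).trans_le
      (getElem_paramIndex_le hj)

theorem length_embeddingWord_le (w : List (σ ⊕ ℕ)) :
    (embeddingWord S w).length ≤ (paramPositions S).length := by
  simpa [embeddingWord] using (takeWhile_prefix _).length_le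

theorem getElem?_embeddingWord (w : List (σ ⊕ ℕ)) {i : ℕ}
    (hi : i < (paramPositions S).length) :
    (embeddingWord S w)[i]? = w[(paramPositions S)[i]]? := by
  have hsorted : (paramPositions S).Pairwise (· ≤ ·) :=
    pairwise_paramPositions.imp fun h => h.1.le
  by_cases hw : (paramPositions S)[i] < w.length
  · have hit := (hsorted.lt_length_takeWhile_lt_iff hi).2 hw
    rw [embeddingWord, getElem?_map, getElem?_eq_getElem hit, (takeWhile_prefix _).getElem,
      getElem?_eq_getElem hw, Option.map_some, getD_eq_getElem]
  · rw [not_lt, ← getElem?_eq_none_iff] at hw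
    rw [hw, getElem?_eq_none_iff, embeddingWord, length_map, ← not_lt,
      hsorted.lt_length_takeWhile_lt_iff hi, not_lt, ← getElem?_eq_none_iff]
    exact hw

theorem isPWord_embeddingWord {w : List (σ ⊕ ℕ)} (hw : IsPWord 0 w) :
    IsPWord 0 (embeddingWord S w) := by
  refine isPWord_zero_iff.2 fun i hi => isPWord_zero_iff.1 hw i ?_
  obtain ⟨q, hq, he⟩ := mem_map.1 hi
  have hqw : q < w.length := by simpa using mem_takeWhile_imp hq
  rw [← he, getD_eq_getElem _ _ hqw]
  exact getElem_mem _

theorem substLetter_getElem_envelope {w : List (σ ⊕ ℕ)} (hw : w ∈ S) {p : ℕ}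
    (hp : p < (envelope S).length) :
    substLetter (embeddingWord S w) (envelope S)[p] = w[p]? := by
  rw [getElem_envelope]
  split_ifs with hl
  · exact (hl.choose_spec ⟨w, hw⟩).symm
  · have hi := paramIndex_lt_length (length_envelope ▸ hp) hl
    rw [substLetter, getElem?_embeddingWord w hi]
    exact congrFun (column_getElem_paramIndex hi) ⟨w, hw⟩

theorem subst_envelope_embeddingWord {w : List (σ ⊕ ℕ)} (hw : w ∈ S) :
    subst (envelope S) (embeddingWord S w) = w := by
  refine subst_eq_of_forall_getElem? fun p => ?_
  by_cases hp : p < (envelope S).length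
  · rw [getElem?_eq_getElem hp, Option.bind_some, substLetter_getElem_envelope hw hp]
  · have hwp : w.length ≤ p := (Finset.le_sup hw).trans (length_envelope (S := S) ▸ not_lt.1 hp)
    rw [getElem?_eq_none (not_lt.1 hp), getElem?_eq_none hwp, Option.bind_none]

theorem length_paramPositions_le [Finite σ] (hS : ∀ w ∈ S, IsPWord 0 w) :
    (paramPositions S).length ≤ (Nat.card σ + 1) ^ S.card := by
  let letters : ℕ → S → Option σ := fun p w => (column S p w).bind Sum.getLeft?
  have hcol : ∀ p, column S p = fun w => (letters p w).map Sum.inl := fun p =>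
    funext fun w => (IsPWord.map_inl_bind_getLeft? (hS w w.2) p).symm
  have hnodup : ((paramPositions S).map letters).Nodup :=
    pairwise_map.2 <| pairwise_paramPositions.imp fun h heq => h.2 (by rw [hcol, hcol, heq])
  simpa [Nat.card_fun, Finite.card_option, Nat.card_eq_finsetCard] using hnodup.length_le_natCard

theorem isEnvelopeOf_envelope [DecidableEq σ] (hS : ∀ w ∈ S, IsPWord 0 w) :
    IsEnvelopeOf (paramPositions S).length (envelope S) S (S.image (embeddingWord S)) := by
  refine ⟨isPWord_envelope, ?_, ?_⟩
  · simp only [Finset.mem_image, forall_exists_index, and_imp, forall_apply_eq_imp_iff₂]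
    exact fun w hw => ⟨isPWord_embeddingWord (hS w hw), length_embeddingWord_le w⟩
  · rw [Finset.image_image]
    exact (Finset.image_congr fun w hw => subst_envelope_embeddingWord hw).trans Finset.image_id

end ParamWord

/-- For every finite alphabet `σ` and every `k ≥ 0` there is a finite bound `T` such that
every set of `k` words over `σ` admits a `d`-parameter envelope with `d ≤ T`. -/
theorem exists_envelope_bound (σ : Type) [Finite σ] [DecidableEq σ] (k : ℕ) :
    ∃ T : ℕ, ∀ S : Finset (List (σ ⊕ ℕ)), S.card = k → (∀ w ∈ S, IsPWord 0 w) →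
      ∃ d ≤ T, ∃ (W : List (σ ⊕ ℕ)) (S' : Finset (List (σ ⊕ ℕ))),
        IsEnvelopeOf d W S S' :=
  ⟨(Nat.card σ + 1) ^ k, fun _ hk hS => ⟨_, hk ▸ ParamWord.length_paramPositions_le hS, _, _,
    ParamWord.isEnvelopeOf_envelope hS⟩⟩
end

section
/- For any finite set S of words over a finite alphabet Σ and any two minimal envelopes W and W' of S (envelopes with the minimal possible number of parameters), the embedding types coincide: τ_W(S) = τ_{W'}(S). -/
/-!
Write `p_i(W)` for the position `W.idxOf (Sum.inr i)` of the first `λ_i` in `W`; for a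
`d`-parameter word it equals `W.length` when `i = d`, and `W(U)` is the image of the prefix of
`W` of length `p_{|U|}(W)`. Two minimal envelopes have the same number `d` of parameters. If
`p_i(W) < p_i(W')` at the least `i` where the positions differ, let `c` be the symbol of `W'` at
position `p_i(W)`: it is a letter or some `λ_j` with `j < i`. Comparing `W(u)` with the equal word
`W'(v)` shows that no `u ∈ τ_W(S)` has length `i` and that `u_i = u(c)` whenever `i < |u|`, so
substituting `c` for `λ_i` in `W` (and renumbering the later parameters) yields an envelope with
`d - 1` parameters. Hence `p_i(W) = p_i(W')` for all `i`, and then each `u ∈ τ_W(S)` is read off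
`W(u)`: its length from `|W(u)| = p_{|u|}(W)` and its letters from the positions `p_k(W)`.
-/

-- `List.idxOf` on `σ ⊕ ℕ` uses the derived `BEq` of `Sum`, which has no `LawfulBEq` in core.
instance Sum.instLawfulBEq {α β : Type*} [BEq α] [LawfulBEq α] [BEq β] [LawfulBEq β] :
    LawfulBEq (α ⊕ β) where
  eq_of_beq {a b} h := by
    rcases a with a | a <;> rcases b with b | b
    · exact congrArg _ (eq_of_beq (h : (a == b) = true))
    · exact absurd (h : false = true) Bool.false_ne_true
    · exact absurd (h : false = true) Bool.false_ne_true
    · exact congrArg _ (eq_of_beq (h : (a == b) = true))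
  rfl {a} := by
    rcases a with a | a
    · exact (beq_self_eq_true a : (a == a) = true)
    · exact (beq_self_eq_true a : (a == a) = true)

variable {σ : Type}

def substSymbol (U : List (σ ⊕ ℕ)) : σ ⊕ ℕ → σ ⊕ ℕ
  | Sum.inl s => Sum.inl s
  | Sum.inr i => U.getD i (Sum.inr 0)

def belowParam (m : ℕ) : σ ⊕ ℕ → Bool
  | Sum.inl _ => true
  | Sum.inr i => decide (i < m)

theorem subst_eq_map_takeWhile (W U : List (σ ⊕ ℕ)) :
    subst W U = (W.takeWhile (belowParam U.length)).map (substSymbol U) := rfl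

theorem List.takeWhile_eq_take_of {α : Type*} {p : α → Bool} {l : List α} {n : ℕ}
    (hpos : ∀ a ∈ l.take n, p a) (hneg : ∀ h : n < l.length, p l[n] = false) :
    l.takeWhile p = l.take n := by
  rw [← l.take_append_drop n, List.takeWhile_append_of_pos hpos, List.take_append_drop]
  rcases Nat.lt_or_ge n l.length with h | h
  · rw [List.drop_eq_getElem_cons h, List.takeWhile_cons_of_neg (by simp [hneg h]),
      List.append_nil]
  · simp [List.drop_eq_nil_of_le h]

theorem isPWord_zero_iff {w : List (σ ⊕ ℕ)} : IsPWord 0 w ↔ ∀ k, Sum.inr k ∉ w := by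
  refine ⟨fun h k hk => (h.1 k hk).not_ge (Nat.zero_le k), fun h => ⟨fun k hk => absurd hk (h k),
    fun k hk => absurd hk (Nat.not_lt_zero k), fun i j _ p hp => absurd ?_ (h j)⟩⟩
  exact hp ▸ List.get_mem w p

namespace IsPWord

theorem inr_mem_iff {d : ℕ} {W : List (σ ⊕ ℕ)} (hW : IsPWord d W) {k : ℕ} :
    Sum.inr k ∈ W ↔ k < d :=
  ⟨hW.1 k, hW.2.1 k⟩

variable [DecidableEq σ] {d m : ℕ} {W U : List (σ ⊕ ℕ)}

theorem idxOf_lt_length_iff (hW : IsPWord d W) {k : ℕ} :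
    W.idxOf (Sum.inr k) < W.length ↔ k < d := by
  rw [List.idxOf_lt_length_iff, hW.inr_mem_iff]

theorem idxOf_lt_idxOf (hW : IsPWord d W) {i j : ℕ} (hij : i < j) (hj : j ≤ d) :
    W.idxOf (Sum.inr i) < W.idxOf (Sum.inr j) := by
  rcases hj.lt_or_eq with hj | rfl
  · have hjW := hW.idxOf_lt_length_iff.2 hj
    obtain ⟨q, hq, hqi⟩ := hW.2.2 i j hij ⟨_, hjW⟩ (by simp [List.getElem_idxOf])
    have hmem : Sum.inr i ∈ W.take (W.idxOf (Sum.inr j)) :=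
      List.mem_take_iff_getElem.2 ⟨q, by simp [Fin.lt_def] at hq; omega, by simpa using hqi⟩
    exact (List.mem_take_iff_idxOf_lt (hW.2.1 i (hij.trans hj))).1 hmem
  · rw [List.idxOf_of_notMem (fun h => (hW.1 _ h).false)]
    exact hW.idxOf_lt_length_iff.2 hij

theorem idxOf_le_idxOf (hW : IsPWord d W) {i j : ℕ} (hij : i ≤ j) (hj : j ≤ d) :
    W.idxOf (Sum.inr i) ≤ W.idxOf (Sum.inr j) := by
  rcases hij.lt_or_eq with hij | rfl
  · exact (hW.idxOf_lt_idxOf hij hj).le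
  · exact le_rfl

theorem lt_of_inr_mem_take (hW : IsPWord d W) {k : ℕ}
    (hk : Sum.inr k ∈ W.take (W.idxOf (Sum.inr m))) : k < m := by
  have hkW := List.mem_of_mem_take hk
  by_contra! hmk
  exact ((List.mem_take_iff_idxOf_lt hkW).1 hk).not_ge
    (hW.idxOf_le_idxOf hmk (hW.1 k hkW).le)

theorem lt_of_getElem?_eq_inr (hW : IsPWord d W) {q k : ℕ} (hq : q < W.idxOf (Sum.inr m))
    (h : W[q]? = some (Sum.inr k)) : k < m :=
  hW.lt_of_inr_mem_take (List.mem_of_getElem? (by rwa [List.getElem?_take_of_lt hq]))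

theorem takeWhile_eq_take (hW : IsPWord d W) {p : σ ⊕ ℕ → Bool}
    (hp : ∀ a, (∀ k, a = Sum.inr k → k ≤ m) → p a = belowParam m a) :
    W.takeWhile p = W.take (W.idxOf (Sum.inr m)) := by
  apply List.takeWhile_eq_take_of
  · rintro (s | k) ha
    · exact hp _ (by simp)
    · have hk := hW.lt_of_inr_mem_take ha
      rw [hp _ fun _ h => Sum.inr_injective h ▸ hk.le]
      simpa [belowParam] using hk
  · intro h
    rw [List.getElem_idxOf h, hp _ (by simp)]
    simp [belowParam]

theorem subst_eq (hW : IsPWord d W) :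
    subst W U = (W.take (W.idxOf (Sum.inr U.length))).map (substSymbol U) := by
  rw [subst_eq_map_takeWhile, hW.takeWhile_eq_take fun _ _ => rfl]

theorem length_subst (hW : IsPWord d W) :
    (subst W U).length = W.idxOf (Sum.inr U.length) := by
  simp [hW.subst_eq, List.idxOf_le_length]

theorem getElem?_subst (hW : IsPWord d W) {q : ℕ}
    (hq : q < W.idxOf (Sum.inr U.length)) : (subst W U)[q]? = W[q]?.map (substSymbol U) := by
  simp [hW.subst_eq, hq]

theorem getElem?_subst_idxOf (hW : IsPWord d W) (hU : U.length ≤ d) {k : ℕ}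
    (hk : k < U.length) : (subst W U)[W.idxOf (Sum.inr k)]? = U[k]? := by
  rw [hW.getElem?_subst (hW.idxOf_lt_idxOf hk hU),
    List.getElem?_idxOf (hW.2.1 k (hk.trans_le hU))]
  simp [substSymbol, hk]

end IsPWord

def liftIdx (i b : ℕ) : ℕ := if b < i then b else b + 1

theorem liftIdx_strictMono (i : ℕ) : StrictMono (liftIdx i) := by
  intro a b h
  unfold liftIdx
  split_ifs <;> omega

def collapse (i : ℕ) (c : σ ⊕ ℕ) : σ ⊕ ℕ → σ ⊕ ℕ
  | Sum.inl s => Sum.inl s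
  | Sum.inr k => if k < i then Sum.inr k else if k = i then c else Sum.inr (k - 1)

theorem collapse_inr_liftIdx (i : ℕ) (c : σ ⊕ ℕ) (b : ℕ) :
    collapse i c (Sum.inr (liftIdx i b)) = Sum.inr b := by
  unfold liftIdx
  split_ifs with h
  · simp [collapse, h]
  · simp only [collapse]
    rw [if_neg (by omega), if_neg (by omega), Nat.add_sub_cancel]

section collapse

variable {i : ℕ} {c : σ ⊕ ℕ}

theorem exists_liftIdx_le_of_collapse_eq_inr (hc : ∀ j, c = Sum.inr j → j < i)
    {x : σ ⊕ ℕ} {b : ℕ} (h : collapse i c x = Sum.inr b) :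
    ∃ k, x = Sum.inr k ∧ liftIdx i b ≤ k := by
  rcases x with s | k
  · simp [collapse] at h
  · refine ⟨k, rfl, ?_⟩
    simp only [collapse] at h
    split_ifs at h with hki hki'
    · cases h
      simp [liftIdx, hki]
    · have hbi := hc b h
      simp only [liftIdx, if_pos hbi]
      omega
    · cases h
      unfold liftIdx
      split_ifs <;> omega

theorem IsPWord.map_collapse {d : ℕ} {W : List (σ ⊕ ℕ)} (hW : IsPWord d W) (hi : i < d)
    (hc : ∀ j, c = Sum.inr j → j < i) : IsPWord (d - 1) (W.map (collapse i c)) := by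
  refine ⟨fun b hb => ?_, fun b hb => ?_, fun a b hab p hp => ?_⟩
  · obtain ⟨x, hx, hxb⟩ := List.mem_map.1 hb
    obtain ⟨k, rfl, hk⟩ := exists_liftIdx_le_of_collapse_eq_inr hc hxb
    have := hW.1 k hx
    unfold liftIdx at hk
    split_ifs at hk <;> omega
  · refine List.mem_map.2 ⟨_, hW.2.1 (liftIdx i b) ?_, collapse_inr_liftIdx i c b⟩
    unfold liftIdx
    split_ifs <;> omega
  · have hp' : collapse i c W[p.1] = Sum.inr b := by simpa using hp
    obtain ⟨k, hk, hbk⟩ := exists_liftIdx_le_of_collapse_eq_inr hc hp'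
    obtain ⟨q, hq, hqa⟩ := hW.2.2 (liftIdx i a) k ((liftIdx_strictMono i hab).trans_le hbk)
      ⟨p, by simpa using p.isLt⟩ (by simp [hk])
    refine ⟨⟨q, by simp⟩, hq, ?_⟩
    simp only [List.get_eq_getElem, List.getElem_map] at hqa ⊢
    rw [hqa, collapse_inr_liftIdx]

theorem belowParam_collapse (hc : ∀ j, c = Sum.inr j → j < i) {u : List (σ ⊕ ℕ)}
    (hu : u.length ≠ i) {a : σ ⊕ ℕ} (ha : ∀ k, a = Sum.inr k → k ≤ u.length) :
    belowParam (u.eraseIdx i).length (collapse i c a) = belowParam u.length a := by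
  rw [List.length_eraseIdx]
  rcases a with s | k
  · rfl
  · have hk := ha k rfl
    rcases lt_trichotomy k i with h | rfl | h
    · simp only [collapse, if_pos h, belowParam, decide_eq_decide]
      split_ifs <;> omega
    · have hku : k < u.length := lt_of_le_of_ne hk (Ne.symm hu)
      simp only [collapse, lt_irrefl, if_false, if_true]
      rcases c with s | j
      · simp [belowParam, hku]
      · have := hc j rfl
        simp only [belowParam, decide_eq_decide, if_pos hku]
        omega
    · simp only [collapse, if_neg h.not_gt, if_neg h.ne', belowParam, decide_eq_decide]
      split_ifs <;> omega

theorem substSymbol_eraseIdx_inr (u : List (σ ⊕ ℕ)) (i k : ℕ) :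
    substSymbol (u.eraseIdx i) (Sum.inr k) = substSymbol u (Sum.inr (liftIdx i k)) := by
  simp only [substSymbol, List.getD_eq_getElem?_getD, List.getElem?_eraseIdx, liftIdx]
  split_ifs <;> rfl

theorem substSymbol_eraseIdx_collapse (hc : ∀ j, c = Sum.inr j → j < i) {u : List (σ ⊕ ℕ)}
    (hval : i < u.length → substSymbol u (Sum.inr i) = substSymbol u c) {a : σ ⊕ ℕ}
    (ha : ∀ k, a = Sum.inr k → k < u.length) :
    substSymbol (u.eraseIdx i) (collapse i c a) = substSymbol u a := by
  rcases a with s | k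
  · rfl
  · simp only [collapse]
    split_ifs with h1 h2
    · simp [substSymbol_eraseIdx_inr, liftIdx, h1]
    · subst h2
      rw [hval (ha _ rfl)]
      rcases c with s | j
      · rfl
      · simp [substSymbol_eraseIdx_inr, liftIdx, hc j rfl]
    · rw [substSymbol_eraseIdx_inr]
      congr 2
      unfold liftIdx
      split_ifs <;> omega

theorem IsPWord.subst_map_collapse [DecidableEq σ] {d : ℕ} {W u : List (σ ⊕ ℕ)}
    (hW : IsPWord d W) (hc : ∀ j, c = Sum.inr j → j < i) (hu : u.length ≠ i)
    (hval : i < u.length → substSymbol u (Sum.inr i) = substSymbol u c) :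
    subst (W.map (collapse i c)) (u.eraseIdx i) = subst W u := by
  rw [subst_eq_map_takeWhile, List.takeWhile_map,
    hW.takeWhile_eq_take (p := belowParam (u.eraseIdx i).length ∘ collapse i c)
      fun a ha => belowParam_collapse hc hu ha, List.map_map, hW.subst_eq]
  refine List.map_congr_left fun a ha => substSymbol_eraseIdx_collapse hc hval ?_
  rintro k rfl
  exact hW.lt_of_inr_mem_take ha

theorem IsEnvelopeOf.map_collapse [DecidableEq σ] {d : ℕ} {W : List (σ ⊕ ℕ)}
    {S S' : Finset (List (σ ⊕ ℕ))} (hE : IsEnvelopeOf d W S S') (hi : i < d)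
    (hc : ∀ j, c = Sum.inr j → j < i) (hlen : ∀ u ∈ S', u.length ≠ i)
    (hval : ∀ u ∈ S', i < u.length → substSymbol u (Sum.inr i) = substSymbol u c) :
    IsEnvelopeOf (d - 1) (W.map (collapse i c)) S (S'.image (·.eraseIdx i)) := by
  obtain ⟨hW, hS', rfl⟩ := hE
  refine ⟨hW.map_collapse hi hc, ?_, ?_⟩
  · simp only [Finset.mem_image]
    rintro _ ⟨u, hu, rfl⟩
    refine ⟨isPWord_zero_iff.2 fun k hk =>
      isPWord_zero_iff.1 (hS' u hu).1 k (List.mem_of_mem_eraseIdx hk), ?_⟩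
    have := (hS' u hu).2
    have := hlen u hu
    rw [List.length_eraseIdx]
    split_ifs <;> omega
  · rw [Finset.image_image]
    exact Finset.image_congr fun u hu => hW.subst_map_collapse hc (hlen u hu) (hval u hu)

end collapse

section comparison

variable [DecidableEq σ] {d : ℕ} {W W' : List (σ ⊕ ℕ)} {S S' S'' : Finset (List (σ ⊕ ℕ))}

theorem IsEnvelopeOf.exists_subst_eq {d' : ℕ} (hE : IsEnvelopeOf d W S S')
    (hE' : IsEnvelopeOf d' W' S S'') {u : List (σ ⊕ ℕ)} (hu : u ∈ S') :
    ∃ v ∈ S'', subst W' v = subst W u := by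
  have hS : subst W u ∈ S := hE.2.2 ▸ Finset.mem_image_of_mem _ hu
  rw [← hE'.2.2] at hS
  simpa using hS

theorem getElem?_eq_of_subst_eq {d' : ℕ} (hW : IsPWord d W) (hW' : IsPWord d' W')
    {u v : List (σ ⊕ ℕ)} (hu : u.length ≤ d) (hv : v.length ≤ d') (huv : subst W u = subst W' v)
    {k : ℕ} (hku : k < u.length) (hkv : k < v.length)
    (hk : W.idxOf (Sum.inr k) = W'.idxOf (Sum.inr k)) : u[k]? = v[k]? := by
  rw [← hW.getElem?_subst_idxOf hu hku, huv, hk, hW'.getElem?_subst_idxOf hv hkv]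

theorem idxOf_inr_ne_of_lt (hW : IsPWord d W) (hW' : IsPWord d W') {i : ℕ} (hi : i < d)
    (hagree : ∀ j < i, W.idxOf (Sum.inr j) = W'.idxOf (Sum.inr j))
    (hlt : W.idxOf (Sum.inr i) < W'.idxOf (Sum.inr i)) {m : ℕ} (hm : m ≤ d) :
    W'.idxOf (Sum.inr m) ≠ W.idxOf (Sum.inr i) := by
  rcases Nat.lt_or_ge m i with hmi | hmi
  · rw [← hagree m hmi]
    exact (hW.idxOf_lt_idxOf hmi hi.le).ne
  · exact (hlt.trans_le (hW'.idxOf_le_idxOf hmi hm)).ne'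

theorem substSymbol_inr_eq_of_idxOf_lt (hW : IsPWord d W) (hW' : IsPWord d W') {i : ℕ}
    (hagree : ∀ j < i, W.idxOf (Sum.inr j) = W'.idxOf (Sum.inr j))
    (hlt : W.idxOf (Sum.inr i) < W'.idxOf (Sum.inr i)) {c : σ ⊕ ℕ}
    (hc : W'[W.idxOf (Sum.inr i)]? = some c) {u v : List (σ ⊕ ℕ)} (hu : u.length ≤ d)
    (hv : v.length ≤ d) (huv : subst W u = subst W' v) (hiu : i < u.length) :
    substSymbol u (Sum.inr i) = substSymbol u c := by
  have hpv : W.idxOf (Sum.inr i) < W'.idxOf (Sum.inr v.length) := by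
    rw [← hW'.length_subst, ← huv, hW.length_subst]
    exact hW.idxOf_lt_idxOf hiu hu
  have hui : u[i]? = some (substSymbol v c) := by
    rw [← hW.getElem?_subst_idxOf hu hiu, huv, hW'.getElem?_subst hpv, hc, Option.map_some]
  rw [show substSymbol u (Sum.inr i) = substSymbol v c by simp [substSymbol, hui]]
  rcases c with s | j
  · rfl
  · have hji : j < i := hW'.lt_of_getElem?_eq_inr hlt hc
    have hjv : j < v.length := by
      by_contra! hvj
      have h₁ := hW'.idxOf_le_idxOf hvj (by omega : j ≤ d)
      have h₂ := hW.idxOf_lt_idxOf hji (by omega : i ≤ d)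
      rw [hagree j hji] at h₂
      omega
    simp [substSymbol, getElem?_eq_of_subst_eq hW hW' hu hv huv (hji.trans hiu) hjv (hagree j hji)]

theorem IsEnvelopeOf.exists_envelope_pred_of_idxOf_lt (hE : IsEnvelopeOf d W S S')
    (hE' : IsEnvelopeOf d W' S S'') {i : ℕ} (hi : i < d)
    (hagree : ∀ j < i, W.idxOf (Sum.inr j) = W'.idxOf (Sum.inr j))
    (hlt : W.idxOf (Sum.inr i) < W'.idxOf (Sum.inr i)) :
    ∃ W₂ T, IsEnvelopeOf (d - 1) W₂ S T := by
  obtain ⟨c, hc⟩ : ∃ c, W'[W.idxOf (Sum.inr i)]? = some c :=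
    ⟨_, List.getElem?_eq_getElem (hlt.trans_le List.idxOf_le_length)⟩
  refine ⟨_, _, hE.map_collapse hi (c := c) (fun j hj => hE'.1.lt_of_getElem?_eq_inr hlt (hj ▸ hc))
    (fun u hu hui => ?_) (fun u hu hiu => ?_)⟩
  · obtain ⟨v, hv, hvu⟩ := hE.exists_subst_eq hE' hu
    apply idxOf_inr_ne_of_lt hE.1 hE'.1 hi hagree hlt (hE'.2.1 v hv).2
    rw [← hE'.1.length_subst, hvu, hE.1.length_subst, hui]
  · obtain ⟨v, hv, hvu⟩ := hE.exists_subst_eq hE' hu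
    exact substSymbol_inr_eq_of_idxOf_lt hE.1 hE'.1 hagree hlt hc (hE.2.1 u hu).2
      (hE'.2.1 v hv).2 hvu.symm hiu

theorem idxOf_inr_eq_of_minimal (hE : IsEnvelopeOf d W S S') (hE' : IsEnvelopeOf d W' S S'')
    (hmin : ∀ e W₂ T, IsEnvelopeOf e W₂ S T → d ≤ e) {k : ℕ} (hk : k < d) :
    W.idxOf (Sum.inr k) = W'.idxOf (Sum.inr k) := by
  induction k using Nat.strong_induction_on with
  | _ k ih =>
    have hagree : ∀ j < k, W.idxOf (Sum.inr j) = W'.idxOf (Sum.inr j) :=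
      fun j hj => ih j hj (hj.trans hk)
    by_contra hne
    obtain ⟨W₂, T, hT⟩ := (lt_or_gt_of_ne hne).elim
      (hE.exists_envelope_pred_of_idxOf_lt hE' hk hagree)
      (hE'.exists_envelope_pred_of_idxOf_lt hE hk fun j hj => (hagree j hj).symm)
    have := hmin _ _ _ hT
    omega

theorem eq_of_idxOf_inr_eq (hW : IsPWord d W) (hW' : IsPWord d W')
    (hagree : ∀ k < d, W.idxOf (Sum.inr k) = W'.idxOf (Sum.inr k)) {m m' : ℕ} (hm : m ≤ d)
    (hm' : m' ≤ d) (h : W.idxOf (Sum.inr m) = W'.idxOf (Sum.inr m')) : m = m' := by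
  by_contra hne
  rcases lt_or_gt_of_ne hne with hlt | hlt
  · have := hW'.idxOf_lt_idxOf hlt hm'
    rw [← hagree m (hlt.trans_le hm')] at this
    omega
  · have := hW.idxOf_lt_idxOf hlt hm
    rw [hagree m' (hlt.trans_le hm)] at this
    omega

theorem IsEnvelopeOf.subset_of_idxOf_inr_eq (hE : IsEnvelopeOf d W S S')
    (hE' : IsEnvelopeOf d W' S S'')
    (hagree : ∀ k < d, W.idxOf (Sum.inr k) = W'.idxOf (Sum.inr k)) : S' ⊆ S'' := by
  intro u hu
  obtain ⟨v, hv, hvu⟩ := hE.exists_subst_eq hE' hu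
  have hud := (hE.2.1 u hu).2
  have hvd := (hE'.2.1 v hv).2
  have hlen : u.length = v.length := by
    apply eq_of_idxOf_inr_eq hE.1 hE'.1 hagree hud hvd
    rw [← hE.1.length_subst, ← hvu, hE'.1.length_subst]
  suffices u = v from this ▸ hv
  refine List.ext_getElem? fun k => ?_
  rcases Nat.lt_or_ge k u.length with hk | hk
  · exact getElem?_eq_of_subst_eq hE.1 hE'.1 hud hvd hvu.symm hk (hlen ▸ hk)
      (hagree k (hk.trans_le hud))
  · rw [List.getElem?_eq_none hk, List.getElem?_eq_none (hlen ▸ hk)]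

end comparison

theorem embedding_type_unique_general {σ : Type} [DecidableEq σ]
    (S : Finset (List (σ ⊕ ℕ)))
    (d d' : ℕ) (W W' : List (σ ⊕ ℕ)) (S' S'' : Finset (List (σ ⊕ ℕ)))
    (hW : IsEnvelopeOf d W S S') (hW' : IsEnvelopeOf d' W' S S'')
    (hmin : ∀ (e : ℕ) (W₂ : List (σ ⊕ ℕ)) (T : Finset (List (σ ⊕ ℕ))),
      IsEnvelopeOf e W₂ S T → d ≤ e)
    (hmin' : ∀ (e : ℕ) (W₂ : List (σ ⊕ ℕ)) (T : Finset (List (σ ⊕ ℕ))),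
      IsEnvelopeOf e W₂ S T → d' ≤ e) :
    S' = S'' := by
  obtain rfl : d' = d := le_antisymm (hmin' d W S' hW) (hmin d' W' S'' hW')
  have hagree := fun k (hk : k < d') => idxOf_inr_eq_of_minimal hW hW' hmin hk
  exact (hW.subset_of_idxOf_inr_eq hW' hagree).antisymm
    (hW'.subset_of_idxOf_inr_eq hW fun k hk => (hagree k hk).symm)

/-- For any two minimal envelopes `W`, `W'` of a finite set `S` of words over `σ`,
the embedding types coincide: `τ_W(S) = τ_{W'}(S)`. -/
theorem embedding_type_unique {σ : Type} [Finite σ] [DecidableEq σ]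
    (S : Finset (List (σ ⊕ ℕ))) (hS : ∀ w ∈ S, IsPWord 0 w)
    (d d' : ℕ) (W W' : List (σ ⊕ ℕ)) (S' S'' : Finset (List (σ ⊕ ℕ)))
    (hW : IsEnvelopeOf d W S S') (hW' : IsEnvelopeOf d' W' S S'')
    (hmin : ∀ (e : ℕ) (W₂ : List (σ ⊕ ℕ)) (T : Finset (List (σ ⊕ ℕ))),
      IsEnvelopeOf e W₂ S T → d ≤ e)
    (hmin' : ∀ (e : ℕ) (W₂ : List (σ ⊕ ℕ)) (T : Finset (List (σ ⊕ ℕ))),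
      IsEnvelopeOf e W₂ S T → d' ≤ e) :
    S' = S'' :=
  embedding_type_unique_general S d d' W W' S' S'' hW hW' hmin hmin'
end

section
/- For every finite alphabet Σ and finite k ≥ 0, there are only finitely many embedding types of k-element subsets of Σ* within their minimal envelopes; i.e., the set {τ(S) : S ⊆ Σ*, |S| = k} is finite, where τ(S) = τ_W(S) for a minimal envelope W of S. -/
section FirstOccurrence

variable {β : Type*} [DecidableEq β] (f : ℕ → β)

noncomputable def firstIndex (p : ℕ) : ℕ := Nat.find (⟨p, rfl⟩ : ∃ q, f q = f p)

lemma firstIndex_le_of_apply_eq {p q : ℕ} (h : f q = f p) : firstIndex f p ≤ q :=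
  Nat.find_min' _ h

lemma firstIndex_le (p : ℕ) : firstIndex f p ≤ p := firstIndex_le_of_apply_eq f rfl

lemma apply_firstIndex (p : ℕ) : f (firstIndex f p) = f p :=
  Nat.find_spec (⟨p, rfl⟩ : ∃ q, f q = f p)

lemma apply_ne_of_lt_firstIndex {p q : ℕ} (h : q < firstIndex f p) : f q ≠ f p :=
  Nat.find_min _ h

lemma firstIndex_congr {p q : ℕ} (h : f p = f q) : firstIndex f p = firstIndex f q :=
  le_antisymm (firstIndex_le_of_apply_eq f (by rw [apply_firstIndex f, h]))
    (firstIndex_le_of_apply_eq f (by rw [apply_firstIndex f, h]))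

def distinctCount (m : ℕ) : ℕ := ((Finset.range m).image f).card

/-- The index of the value `f p` when the values of `f` are listed in order of first
appearance. -/
noncomputable def valueRank (p : ℕ) : ℕ := distinctCount f (firstIndex f p)

noncomputable def positionOfRank (i : ℕ) : ℕ := sInf {q | valueRank f q = i}

lemma distinctCount_mono : Monotone (distinctCount f) := fun _ _ h =>
  Finset.card_le_card (Finset.image_subset_image (Finset.range_subset_range.2 h))

lemma distinctCount_succ_of_forall_ne {m : ℕ} (h : ∀ q < m, f q ≠ f m) :
    distinctCount f (m + 1) = distinctCount f m + 1 := by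
  rw [distinctCount, Finset.range_add_one, Finset.image_insert, Finset.card_insert_of_notMem,
    distinctCount]
  rintro hm
  obtain ⟨q, hq, hfq⟩ := Finset.mem_image.1 hm
  exact h q (Finset.mem_range.1 hq) hfq

lemma distinctCount_succ_of_exists_eq {m : ℕ} (h : ∃ q < m, f q = f m) :
    distinctCount f (m + 1) = distinctCount f m := by
  obtain ⟨q, hq, hfq⟩ := h
  rw [distinctCount, Finset.range_add_one, Finset.image_insert,
    Finset.insert_eq_self.2 (Finset.mem_image.2 ⟨q, Finset.mem_range.2 hq, hfq⟩), distinctCount]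

lemma distinctCount_firstIndex_succ (p : ℕ) :
    distinctCount f (firstIndex f p + 1) = valueRank f p + 1 :=
  distinctCount_succ_of_forall_ne f fun _ hq => by
    rw [apply_firstIndex f]; exact apply_ne_of_lt_firstIndex f hq

lemma valueRank_lt_distinctCount_of_firstIndex_lt {p m : ℕ} (h : firstIndex f p < m) :
    valueRank f p < distinctCount f m :=
  calc valueRank f p < distinctCount f (firstIndex f p + 1) := by
        rw [distinctCount_firstIndex_succ]; exact Nat.lt_succ_self _
    _ ≤ distinctCount f m := distinctCount_mono f h

lemma valueRank_lt_distinctCount {p m : ℕ} (h : p < m) : valueRank f p < distinctCount f m :=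
  valueRank_lt_distinctCount_of_firstIndex_lt f ((firstIndex_le f p).trans_lt h)

lemma distinctCount_le_valueRank {p m : ℕ} (h : ∀ q < m, f q ≠ f p) :
    distinctCount f m ≤ valueRank f p :=
  distinctCount_mono f (le_of_not_gt fun hlt => h _ hlt (apply_firstIndex f p))

lemma valueRank_eq_valueRank_iff {p q : ℕ} : valueRank f p = valueRank f q ↔ f p = f q := by
  refine ⟨fun h => ?_, fun h => by rw [valueRank, firstIndex_congr f h, valueRank]⟩
  rcases lt_trichotomy (firstIndex f p) (firstIndex f q) with hlt | heq | hgt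
  · exact absurd h (valueRank_lt_distinctCount_of_firstIndex_lt f hlt).ne
  · rw [← apply_firstIndex f p, heq, apply_firstIndex f]
  · exact absurd h (valueRank_lt_distinctCount_of_firstIndex_lt f hgt).ne'

lemma exists_valueRank_eq {i m : ℕ} (h : i < distinctCount f m) : ∃ q < m, valueRank f q = i := by
  induction m with
  | zero => simp [distinctCount] at h
  | succ m ih =>
    by_cases hrep : ∃ q < m, f q = f m
    · obtain ⟨q, hq, rfl⟩ := ih (by rwa [distinctCount_succ_of_exists_eq f hrep] at h)
      exact ⟨q, hq.trans m.lt_succ_self, rfl⟩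
    · push Not at hrep
      have hfirst : firstIndex f m = m :=
        le_antisymm (firstIndex_le f m)
          (le_of_not_gt fun hlt => hrep _ hlt (apply_firstIndex f m))
      rw [distinctCount_succ_of_forall_ne f hrep] at h
      rcases (Nat.lt_succ_iff.1 h).lt_or_eq with hi | rfl
      · obtain ⟨q, hq, rfl⟩ := ih hi
        exact ⟨q, hq.trans m.lt_succ_self, rfl⟩
      · exact ⟨m, m.lt_succ_self, by rw [valueRank, hfirst]⟩

lemma positionOfRank_lt {i m : ℕ} (h : i < distinctCount f m) : positionOfRank f i < m := by
  obtain ⟨q, hq, hfq⟩ := exists_valueRank_eq f h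
  exact (Nat.sInf_le (show q ∈ {q | valueRank f q = i} from hfq)).trans_lt hq

lemma apply_positionOfRank_valueRank (p : ℕ) : f (positionOfRank f (valueRank f p)) = f p :=
  (valueRank_eq_valueRank_iff f).1
    (Nat.sInf_mem (⟨p, rfl⟩ : {q | valueRank f q = valueRank f p}.Nonempty))

lemma distinctCount_le_natCard [Finite β] (m : ℕ) : distinctCount f m ≤ Nat.card β := by
  have := Fintype.ofFinite β
  rw [Nat.card_eq_fintype_card]
  exact Finset.card_le_univ _

lemma isPWord_map_valueRank {σ : Type} (L : ℕ) :
    IsPWord (σ := σ) (distinctCount f L) ((List.range L).map fun p => Sum.inr (valueRank f p)) := by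
  refine ⟨fun i hi => ?_, fun i hi => ?_, fun i j hij p hp => ?_⟩
  · obtain ⟨q, hq, hqi⟩ := List.mem_map.1 hi
    cases hqi
    exact valueRank_lt_distinctCount f (List.mem_range.1 hq)
  · obtain ⟨q, hq, rfl⟩ := exists_valueRank_eq f hi
    exact List.mem_map.2 ⟨q, List.mem_range.2 hq, rfl⟩
  · simp only [List.get_eq_getElem, List.getElem_map, List.getElem_range, Sum.inr.injEq] at hp
    subst hp
    obtain ⟨q, hq, hqi⟩ := exists_valueRank_eq f hij
    have hqp : q < p := hq.trans_le (firstIndex_le f p)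
    exact ⟨⟨q, hqp.trans p.isLt⟩, hqp, by simp [hqi]⟩

end FirstOccurrence

lemma List.takeWhile_range {P : ℕ → Bool} {m n : ℕ} (hmn : m ≤ n)
    (h : ∀ p < n, P p = true ↔ p < m) : (List.range n).takeWhile P = List.range m := by
  obtain ⟨k, rfl⟩ := Nat.exists_eq_add_of_le hmn
  rw [List.range_add, List.takeWhile_append_of_pos fun p hp =>
    (h p (by simp at hp; omega)).2 (List.mem_range.1 hp)]
  cases k with
  | zero => simp
  | succ k =>
    rw [List.range_succ_eq_map, List.map_cons, List.takeWhile_cons_of_neg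
      (by simpa using (h m (by omega)).not.2 (lt_irrefl m))]
    simp

section Envelope

variable {σ : Type}

lemma isPWord_zero_iff_s4 {w : List (σ ⊕ ℕ)} :
    IsPWord 0 w ↔ w ∈ Set.range (List.map Sum.inl) := by
  rw [Set.range_list_map]
  constructor
  · rintro h (s | i) hi
    · exact ⟨s, rfl⟩
    · exact absurd (h.1 i hi) (Nat.not_lt_zero i)
  · intro h
    have hparam : ∀ i, Sum.inr i ∉ w := fun i hi => by
      obtain ⟨s, hs⟩ := h _ hi
      cases hs
    refine ⟨fun i hi => absurd hi (hparam i), fun i hi => absurd hi (Nat.not_lt_zero i),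
      fun i j _ p hp => absurd (hp ▸ List.get_mem w p) (hparam j)⟩

lemma isPWord_zero_of_subset {v w : List (σ ⊕ ℕ)} (hw : IsPWord 0 w) (h : v ⊆ w) :
    IsPWord 0 v := by
  rw [isPWord_zero_iff_s4, Set.range_list_map] at hw ⊢
  exact fun a ha => hw a (h ha)

lemma finite_isPWord_zero_length_le [Finite σ] (n : ℕ) :
    {w : List (σ ⊕ ℕ) | IsPWord 0 w ∧ w.length ≤ n}.Finite := by
  refine ((List.finite_length_le σ n).image (List.map Sum.inl)).subset ?_
  rintro _ ⟨hw, hlen⟩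
  obtain ⟨l, rfl⟩ := isPWord_zero_iff_s4.1 hw
  exact ⟨l, by simpa using hlen, rfl⟩

def column (S : Finset (List (σ ⊕ ℕ))) (p : ℕ) : S → Option σ :=
  fun w => (w.1[p]?).bind Sum.getLeft?

variable {S : Finset (List (σ ⊕ ℕ))}

lemma getElem?_eq_of_column_eq (hS : ∀ w ∈ S, IsPWord 0 w) {w : List (σ ⊕ ℕ)} (hw : w ∈ S)
    {p q : ℕ} (h : column S p = column S q) : w[p]? = w[q]? := by
  obtain ⟨l, rfl⟩ := isPWord_zero_iff_s4.1 (hS _ hw)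
  have hcol := congrFun h ⟨_, hw⟩
  have getLeft?_inl : ∀ o : Option σ, (o.map (Sum.inl (β := ℕ))).bind Sum.getLeft? = o := by
    rintro (_ | _) <;> rfl
  simp only [column, List.getElem?_map, getLeft?_inl] at hcol
  rw [List.getElem?_map, List.getElem?_map, hcol]

variable [DecidableEq σ]

variable (S) in
noncomputable def envelopeWord : List (σ ⊕ ℕ) :=
  (List.range (S.sup List.length)).map fun p => Sum.inr (valueRank (column S) p)

variable (S) in
noncomputable def embed (w : List (σ ⊕ ℕ)) : List (σ ⊕ ℕ) :=
  (List.range (distinctCount (column S) w.length)).map fun j =>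
    w.getD (positionOfRank (column S) j) (Sum.inr 0)

lemma length_embed (w : List (σ ⊕ ℕ)) :
    (embed S w).length = distinctCount (column S) w.length := by
  simp [embed]

lemma embed_subset (w : List (σ ⊕ ℕ)) : embed S w ⊆ w := by
  intro a ha
  obtain ⟨j, hj, rfl⟩ := List.mem_map.1 ha
  have hpos := positionOfRank_lt (column S) (List.mem_range.1 hj)
  rw [List.getD_eq_getElem _ _ hpos]
  exact List.getElem_mem hpos

lemma valueRank_lt_length_embed_iff (hS : ∀ w ∈ S, IsPWord 0 w) {w : List (σ ⊕ ℕ)}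
    (hw : w ∈ S) {p : ℕ} : valueRank (column S) p < (embed S w).length ↔ p < w.length := by
  rw [length_embed]
  refine ⟨fun h => lt_of_not_ge fun hp => h.not_ge (distinctCount_le_valueRank _ ?_),
    valueRank_lt_distinctCount _⟩
  intro q hq hcol
  simpa [hq, hp] using getElem?_eq_of_column_eq hS hw hcol

lemma getD_embed_valueRank (hS : ∀ w ∈ S, IsPWord 0 w) {w : List (σ ⊕ ℕ)} (hw : w ∈ S)
    {p : ℕ} (hp : p < w.length) :
    (embed S w).getD (valueRank (column S) p) (Sum.inr 0) = w[p] := by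
  rw [List.getD_eq_getElem _ _ ((valueRank_lt_length_embed_iff hS hw).2 hp)]
  simp only [embed, List.getElem_map, List.getElem_range]
  rw [List.getD_eq_getElem?_getD,
    getElem?_eq_of_column_eq hS hw (apply_positionOfRank_valueRank _ p),
    List.getElem?_eq_getElem hp, Option.getD_some]

lemma subst_envelopeWord_embed (hS : ∀ w ∈ S, IsPWord 0 w) {w : List (σ ⊕ ℕ)} (hw : w ∈ S) :
    subst (envelopeWord S) (embed S w) = w := by
  rw [subst, envelopeWord, List.takeWhile_map,
    List.takeWhile_range (Finset.le_sup hw) fun p _ => by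
      simpa using valueRank_lt_length_embed_iff hS hw, List.map_map]
  refine List.ext_getElem (by simp) fun p _ hp => ?_
  simpa using getD_embed_valueRank hS hw hp

lemma isEnvelopeOf_envelopeWord (hS : ∀ w ∈ S, IsPWord 0 w) :
    IsEnvelopeOf (distinctCount (column S) (S.sup List.length)) (envelopeWord S) S
      (S.image (embed S)) := by
  refine ⟨isPWord_map_valueRank _ _, ?_, ?_⟩
  · rintro _ hw'
    obtain ⟨w, hw, rfl⟩ := Finset.mem_image.1 hw'
    refine ⟨isPWord_zero_of_subset (hS w hw) (embed_subset w), ?_⟩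
    rw [length_embed]
    exact distinctCount_mono _ (Finset.le_sup hw)
  · rw [Finset.image_image]
    exact (Finset.image_congr fun w hw => subst_envelopeWord_embed hS hw).trans Finset.image_id'

lemma exists_isEnvelopeOf_le [Finite σ] (hS : ∀ w ∈ S, IsPWord 0 w) :
    ∃ (e : ℕ) (W : List (σ ⊕ ℕ)) (T : Finset (List (σ ⊕ ℕ))),
      IsEnvelopeOf e W S T ∧ e ≤ Nat.card (Option σ) ^ S.card :=
  ⟨_, _, _, isEnvelopeOf_envelopeWord hS, by
    simpa [Nat.card_fun] using distinctCount_le_natCard (column S) (S.sup List.length)⟩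

end Envelope

/-- There are only finitely many embedding types of `k`-element sets of words over a
finite alphabet within their minimal envelopes. -/
theorem finitely_many_embedding_types (σ : Type) [Finite σ] [DecidableEq σ] (k : ℕ) :
    {S' : Finset (List (σ ⊕ ℕ)) |
      ∃ (S : Finset (List (σ ⊕ ℕ))) (d : ℕ) (W : List (σ ⊕ ℕ)),
        S.card = k ∧ (∀ w ∈ S, IsPWord 0 w) ∧ IsEnvelopeOf d W S S' ∧
        ∀ (e : ℕ) (W₂ : List (σ ⊕ ℕ)) (T : Finset (List (σ ⊕ ℕ))),
          IsEnvelopeOf e W₂ S T → d ≤ e}.Finite := by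
  have hwords := finite_isPWord_zero_length_le (σ := σ) (Nat.card (Option σ) ^ k)
  refine (hwords.finite_subsets.preimage Finset.coe_injective.injOn).subset ?_
  rintro S' ⟨S, d, W, rfl, hS, hEnv, hmin⟩ w hw
  obtain ⟨e, W₂, T, hT, he⟩ := exists_isEnvelopeOf_le hS
  obtain ⟨hw₀, hlen⟩ := hEnv.2.1 w hw
  exact ⟨hw₀, hlen.trans ((hmin e W₂ T hT).trans he)⟩
end

section
/- Let L be a finite relational language with only unary and binary symbols, and let K be a countably infinite irreducible L-structure such that every countable L-structure A has a (strong) completion to K whenever every induced cycle of A completes to K and every irreducible substructure of A of size at most 2 embeds into K. If h : A → B is a homomorphism-embedding of (countable) L-structures and B has a completion c : B → K, then A has a completion d : A → K. -/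
/-- A structure in a relational language with unary symbols `L1` and binary symbols `L2`,
on vertex set `V`. -/
structure Str (L1 L2 V : Type) where
  unary : L1 → V → Prop
  rel : L2 → V → V → Prop

namespace Str

variable {L1 L2 V W : Type}

/-- Two distinct vertices are adjacent if some binary relation holds between them
in either order. -/
def Adj (A : Str L1 L2 V) (x y : V) : Prop :=
  x ≠ y ∧ ∃ r, A.rel r x y ∨ A.rel r y x

/-- The substructure induced on a set of vertices. -/
def Induced (A : Str L1 L2 V) (S : Set V) : Str L1 L2 S where
  unary r x := A.unary r x.1
  rel r x y := A.rel r x.1 y.1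

/-- Homomorphism of structures. -/
def IsHom (A : Str L1 L2 V) (B : Str L1 L2 W) (f : V → W) : Prop :=
  (∀ r x, A.unary r x → B.unary r (f x)) ∧
  (∀ r x y, A.rel r x y → B.rel r (f x) (f y))

/-- Embedding of structures. -/
def IsEmb (A : Str L1 L2 V) (B : Str L1 L2 W) (f : V → W) : Prop :=
  Function.Injective f ∧
  (∀ r x, A.unary r x ↔ B.unary r (f x)) ∧
  (∀ r x y, A.rel r x y ↔ B.rel r (f x) (f y))

/-- A structure is irreducible if any two distinct vertices are adjacent. -/
def Irred (A : Str L1 L2 V) : Prop :=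
  ∀ x y : V, x ≠ y → A.Adj x y

/-- A homomorphism-embedding: a homomorphism whose restriction to every irreducible
substructure is an embedding. -/
def IsHomEmb (A : Str L1 L2 V) (B : Str L1 L2 W) (f : V → W) : Prop :=
  A.IsHom B f ∧
  ∀ S : Set V, (A.Induced S).Irred → (A.Induced S).IsEmb B (fun x => f x.1)

/-- A (strong) completion of `A` to `K`: an injective homomorphism-embedding into the
irreducible structure `K`. -/
def IsCompletion (A : Str L1 L2 V) (K : Str L1 L2 W) (f : V → W) : Prop :=
  K.Irred ∧ Function.Injective f ∧ A.IsHomEmb K f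

/-- A cycle: a cyclic sequence of `ℓ ≥ 3` distinct vertices with consecutive vertices
adjacent. -/
def IsCycle (A : Str L1 L2 V) (ℓ : ℕ) (v : ZMod ℓ → V) : Prop :=
  3 ≤ ℓ ∧ Function.Injective v ∧ ∀ i, A.Adj (v i) (v (i + 1))

/-- An induced cycle: no adjacencies other than the consecutive ones. -/
def IsInducedCycle (A : Str L1 L2 V) (ℓ : ℕ) (v : ZMod ℓ → V) : Prop :=
  A.IsCycle ℓ v ∧
  ∀ i j, i ≠ j → j ≠ i + 1 → i ≠ j + 1 → ¬ A.Adj (v i) (v j)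

/-- Every induced cycle of `A` (seen as a substructure) has a completion to `K`. -/
def CycleCompletes (A : Str L1 L2 V) (K : Str L1 L2 W) : Prop :=
  ∀ (ℓ : ℕ) (v : ZMod ℓ → V), A.IsInducedCycle ℓ v →
    ∃ f : Set.range v → W, (A.Induced (Set.range v)).IsCompletion K f

/-- Every irreducible substructure of `A` of size at most `c` embeds into `K`. -/
def SmallIrredEmbed (A : Str L1 L2 V) (K : Str L1 L2 W) (c : ℕ) : Prop :=
  ∀ S : Set V, S.Finite → S.ncard ≤ c → (A.Induced S).Irred →
    ∃ f : S → W, (A.Induced S).IsEmb K f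

end Str

/-- The hypothesis of Theorem 1: every countable structure `A` has a completion to `K`
provided every induced cycle of `A` completes to `K` and every irreducible substructure
of `A` of size at most 2 embeds into `K`. -/
def CompletionHyp {L1 L2 W : Type} (K : Str L1 L2 W) : Prop :=
  ∀ (V : Type) [Countable V] (A : Str L1 L2 V),
    A.CycleCompletes K → A.SmallIrredEmbed K 2 →
      ∃ f : V → W, A.IsCompletion K f

namespace Str

section Helpers

variable {L1 L2 U U' : Type}

theorem adj_symm {C : Str L1 L2 U} {x y : U} (h : C.Adj x y) : C.Adj y x :=
  ⟨h.1.symm, h.2.imp fun _ hr => hr.symm⟩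

theorem irred_single (C : Str L1 L2 U) (x : U) : (C.Induced {x}).Irred := by
  rintro a b hab
  have : a.1 = b.1 := by
    have ha := Set.mem_singleton_iff.mp a.2
    have hb := Set.mem_singleton_iff.mp b.2
    rw [ha, hb]
  exact absurd (Subtype.ext this) hab

theorem irred_pair {C : Str L1 L2 U} {x y : U} (h : C.Adj x y) :
    (C.Induced {x, y}).Irred := by
  rintro ⟨a, ha⟩ ⟨b, hb⟩ hab
  have hab' : a ≠ b := fun e => hab (Subtype.ext e)
  refine ⟨hab, ?_⟩
  simp only [Set.mem_insert_iff, Set.mem_singleton_iff] at ha hb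
  obtain ⟨r, hr⟩ := h.2
  rcases ha with rfl | rfl <;> rcases hb with rfl | rfl
  · exact absurd rfl hab'
  · exact ⟨r, hr⟩
  · exact ⟨r, hr.symm⟩
  · exact absurd rfl hab'

theorem pair_transfer {C : Str L1 L2 U} {D : Str L1 L2 U'} {f : U → U'}
    (hf : C.IsHomEmb D f) {x y : U} (h : C.Adj x y) :
    f x ≠ f y ∧ ∀ r, (C.rel r x y ↔ D.rel r (f x) (f y)) ∧
      (C.rel r y x ↔ D.rel r (f y) (f x)) := by
  have hx : x ∈ ({x, y} : Set U) := Set.mem_insert _ _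
  have hy : y ∈ ({x, y} : Set U) := Set.mem_insert_iff.mpr (Or.inr rfl)
  obtain ⟨hinj, _, hrel⟩ := hf.2 {x, y} (irred_pair h)
  refine ⟨fun e => h.1 ?_, fun r => ⟨hrel r ⟨x, hx⟩ ⟨y, hy⟩, hrel r ⟨y, hy⟩ ⟨x, hx⟩⟩⟩
  exact congrArg Subtype.val (hinj (a₁ := ⟨x, hx⟩) (a₂ := ⟨y, hy⟩) e)

theorem single_transfer {C : Str L1 L2 U} {D : Str L1 L2 U'} {f : U → U'}
    (hf : C.IsHomEmb D f) (x : U) :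
    (∀ r, C.unary r x ↔ D.unary r (f x)) ∧
      ∀ r, C.rel r x x ↔ D.rel r (f x) (f x) := by
  obtain ⟨_, hun, hrel⟩ := hf.2 {x} (irred_single C x)
  exact ⟨fun r => hun r ⟨x, rfl⟩, fun r => hrel r ⟨x, rfl⟩ ⟨x, rfl⟩⟩

theorem isCompletion_of_full {C : Str L1 L2 U} {K : Str L1 L2 U'} (hK : K.Irred)
    {S : Set U} {f : S → U'} (hinj : Function.Injective f)
    (hu : ∀ r x, (C.Induced S).unary r x ↔ K.unary r (f x))
    (hr : ∀ r x y, (C.Induced S).rel r x y ↔ K.rel r (f x) (f y)) :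
    (C.Induced S).IsCompletion K f :=
  ⟨hK, hinj, ⟨fun r x h => (hu r x).1 h, fun r x y h => (hr r x y).1 h⟩,
    fun T _ => ⟨fun a b hab => Subtype.ext (hinj hab),
      fun r a => hu r a.1, fun r a b => hr r a.1 b.1⟩⟩

end Helpers

end Str
namespace Str

section Gadgets

variable {L1 L2 W : Type}

/-- vertex labels for the path `y - x - z` (centre at index 1). -/
def t3' (x y z : W) : ZMod 3 → W := fun i => if i = 0 then y else if i = 1 then x else z

/-- vertex labels for the 4-cycle `x y x z`. -/
def t4' (x y z : W) : ZMod 4 → W := fun k => if k = 1 then y else if k = 3 then z else x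

/-- vertex labels for the square gadget. -/
def s4 (a b c : W) : ZMod 4 → W := fun i => if i = 1 then b else if i = 3 then c else a

@[simp] theorem t3'_0 (x y z : W) : t3' x y z 0 = y := by
  rw [t3', if_pos rfl]
@[simp] theorem t3'_1 (x y z : W) : t3' x y z 1 = x := by
  rw [t3', if_neg (by decide), if_pos rfl]
@[simp] theorem t3'_2 (x y z : W) : t3' x y z 2 = z := by
  rw [t3', if_neg (by decide), if_neg (by decide)]

@[simp] theorem t4'_0 (x y z : W) : t4' x y z 0 = x := by
  rw [t4', if_neg (by decide), if_neg (by decide)]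
@[simp] theorem t4'_1 (x y z : W) : t4' x y z 1 = y := by
  rw [t4', if_pos rfl]
@[simp] theorem t4'_2 (x y z : W) : t4' x y z 2 = x := by
  rw [t4', if_neg (by decide), if_neg (by decide)]
@[simp] theorem t4'_3 (x y z : W) : t4' x y z 3 = z := by
  rw [t4', if_neg (by decide), if_pos rfl]

@[simp] theorem s4_0 (a b c : W) : s4 a b c 0 = a := by
  rw [s4, if_neg (by decide), if_neg (by decide)]
@[simp] theorem s4_1 (a b c : W) : s4 a b c 1 = b := by
  rw [s4, if_pos rfl]
@[simp] theorem s4_2 (a b c : W) : s4 a b c 2 = a := by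
  rw [s4, if_neg (by decide), if_neg (by decide)]
@[simp] theorem s4_3 (a b c : W) : s4 a b c 3 = c := by
  rw [s4, if_neg (by decide), if_pos rfl]

/-- the path `y - x - z` as a structure on `ZMod 3`, with labels from `K`. -/
def pathStr (K : Str L1 L2 W) (x y z : W) : Str L1 L2 (ZMod 3) where
  unary r i := K.unary r (t3' x y z i)
  rel r i j := K.rel r (t3' x y z i) (t3' x y z j) ∧ (i = 1 ∨ j = 1 ∨ i = j)

/-- the square with a diagonal, on `ZMod 4`, with labels `a b a c` from `K`;
all pairs are adjacent except `{0, 2}`. -/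
def sqStr (K : Str L1 L2 W) (a b c : W) : Str L1 L2 (ZMod 4) where
  unary r i := K.unary r (s4 a b c i)
  rel r i j := K.rel r (s4 a b c i) (s4 a b c j) ∧ ¬(i = 0 ∧ j = 2) ∧ ¬(i = 2 ∧ j = 0)

/-- the structure of "clones": countably many copies of each vertex of `K`,
with distinct clones of the same vertex non-adjacent. -/
def cloneStr (K : Str L1 L2 W) : Str L1 L2 (W × ℕ) where
  unary r p := K.unary r p.1
  rel r p q := K.rel r p.1 q.1 ∧ (p.1 ≠ q.1 ∨ p = q)

theorem path_no_cycle (K : Str L1 L2 W) (x y z : W) (ℓ : ℕ) (v : ZMod ℓ → ZMod 3) :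
    ¬ (pathStr K x y z).IsInducedCycle ℓ v := by
  rintro ⟨⟨hl3, hinj, hadj⟩, -⟩
  haveI : NeZero ℓ := ⟨by omega⟩
  have hle : ℓ ≤ 3 := by simpa [ZMod.card] using Fintype.card_le_of_injective v hinj
  have hl : ℓ = 3 := by omega
  subst hl
  have hsurj := (Finite.injective_iff_bijective.mp hinj).surjective
  obtain ⟨i0, hi0⟩ := hsurj 0
  obtain ⟨i2, hi2⟩ := hsurj 2
  have hne : i0 ≠ i2 := fun e => by rw [e, hi2] at hi0; exact absurd hi0 (by decide)
  have hnadj : ∀ r, ¬ ((pathStr K x y z).rel r 0 2 ∨ (pathStr K x y z).rel r 2 0) := by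
    rintro r (⟨-, h⟩ | ⟨-, h⟩) <;> revert h <;> decide
  have e3 : ∀ d : ZMod 3, d = 0 ∨ d = 1 ∨ d = 2 := by decide
  rcases e3 (i2 - i0) with hd | hd | hd
  · exact hne (by linear_combination -hd)
  · have h1 : i2 = i0 + 1 := by linear_combination hd
    obtain ⟨-, r, hr⟩ := hadj i0
    rw [← h1, hi0, hi2] at hr
    exact hnadj r hr
  · have h1 : i0 = i2 + 1 := by
      have h4 : (3 : ZMod 3) = 0 := by decide
      linear_combination -hd - h4
    obtain ⟨-, r, hr⟩ := hadj i2
    rw [← h1, hi0, hi2] at hr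
    exact hnadj r (hr.symm)
end Gadgets

end Str
namespace Str

section Square

variable {L1 L2 W : Type} {K : Str L1 L2 W} {a b c : W}

theorem e4 : ∀ d : ZMod 4, d = 0 ∨ d = 1 ∨ d = 2 ∨ d = 3 := by decide
theorem e3 : ∀ d : ZMod 3, d = 0 ∨ d = 1 ∨ d = 2 := by decide

theorem sq_collision (hab : a ≠ b) (hac : a ≠ c) (hbc : b ≠ c) :
    ∀ i j : ZMod 4, s4 a b c i = s4 a b c j →
      i = j ∨ (i = 0 ∧ j = 2) ∨ (i = 2 ∧ j = 0) := by
  intro i j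
  rcases e4 i with rfl | rfl | rfl | rfl <;> rcases e4 j with rfl | rfl | rfl | rfl <;>
    simp_all [s4_0, s4_1, s4_2, s4_3] <;> tauto

theorem sq_rel_iff (r : L2) (i j : ZMod 4) (h1 : ¬(i = 0 ∧ j = 2)) (h2 : ¬(i = 2 ∧ j = 0)) :
    ((sqStr K a b c).rel r i j ↔ K.rel r (s4 a b c i) (s4 a b c j)) :=
  ⟨And.left, fun h => ⟨h, h1, h2⟩⟩

theorem sq_not02 : ∀ r, ¬((sqStr K a b c).rel r 0 2 ∨ (sqStr K a b c).rel r 2 0) := by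
  rintro r (⟨-, h, -⟩ | ⟨-, -, h⟩) <;> exact h ⟨rfl, rfl⟩

theorem sq_adj (hK : K.Irred) (i j : ZMod 4) (hne : s4 a b c i ≠ s4 a b c j)
    (h1 : ¬(i = 0 ∧ j = 2)) (h2 : ¬(i = 2 ∧ j = 0)) : (sqStr K a b c).Adj i j := by
  refine ⟨fun e => hne (by rw [e]), ?_⟩
  obtain ⟨-, r, hr⟩ := hK _ _ hne
  rcases hr with hr | hr
  · exact ⟨r, Or.inl ⟨hr, h1, h2⟩⟩
  · exact ⟨r, Or.inr ⟨hr, fun ⟨e1, e2⟩ => h2 ⟨e2, e1⟩, fun ⟨e1, e2⟩ => h1 ⟨e2, e1⟩⟩⟩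

theorem sq_smallEmbed (hK : K.Irred) (hab : a ≠ b) (hac : a ≠ c) (hbc : b ≠ c) :
    (sqStr K a b c).SmallIrredEmbed K 2 := by
  intro S _ _ hS
  refine ⟨fun t => s4 a b c t.1, ?_, fun r t => Iff.rfl, ?_⟩
  · intro t t' he
    by_contra hne
    have htne : t.1 ≠ t'.1 := fun e => hne (Subtype.ext e)
    obtain ⟨-, r, hr⟩ := hS t t' hne
    rcases sq_collision hab hac hbc _ _ he with heq | ⟨h0, h2⟩ | ⟨h2, h0⟩
    · exact htne heq
    · rcases hr with ⟨-, hn, -⟩ | ⟨-, -, hn⟩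
      · exact hn ⟨h0, h2⟩
      · exact hn ⟨h2, h0⟩
    · rcases hr with ⟨-, -, hn⟩ | ⟨-, hn, -⟩
      · exact hn ⟨h2, h0⟩
      · exact hn ⟨h0, h2⟩
  · intro r t t'
    refine ⟨And.left, fun hk => ⟨hk, ?_, ?_⟩⟩
    · rintro ⟨h0, h2⟩
      by_cases he : t = t'
      · rw [he] at h0; rw [h0] at h2; exact absurd h2 (by decide)
      · obtain ⟨-, r', hr'⟩ := hS t t' he
        rcases hr' with ⟨-, hn, -⟩ | ⟨-, -, hn⟩
        · exact hn ⟨h0, h2⟩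
        · exact hn ⟨h2, h0⟩
    · rintro ⟨h2, h0⟩
      by_cases he : t = t'
      · rw [he] at h2; rw [h2] at h0; exact absurd h0 (by decide)
      · obtain ⟨-, r', hr'⟩ := hS t t' he
        rcases hr' with ⟨-, -, hn⟩ | ⟨-, hn, -⟩
        · exact hn ⟨h2, h0⟩
        · exact hn ⟨h0, h2⟩

theorem sq_cycles (hK : K.Irred) (hab : a ≠ b) (hac : a ≠ c) (hbc : b ≠ c) :
    (sqStr K a b c).CycleCompletes K := by
  rintro ℓ v ⟨⟨hl3, hinj, hadj⟩, hind⟩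
  haveI : NeZero ℓ := ⟨by omega⟩
  have hle : ℓ ≤ 4 := by simpa [ZMod.card] using Fintype.card_le_of_injective v hinj
  have h44 : (4 : ZMod 4) = 0 := by decide
  have hl : ℓ = 3 ∨ ℓ = 4 := by omega
  rcases hl with hl | hl
  · -- triangle case
    subst hl
    have hno : ∀ p q : ZMod 3, v p = 0 → v q = 2 → False := by
      intro p q hp hq
      have hpq : p ≠ q := fun e => by rw [e, hq] at hp; exact absurd hp (by decide)
      rcases e3 (q - p) with hd | hd | hd
      · exact hpq (by linear_combination -hd)
      · have h1 : q = p + 1 := by linear_combination hd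
        obtain ⟨-, r, hr⟩ := hadj p
        rw [← h1, hp, hq] at hr
        exact sq_not02 r hr
      · have h33 : (3 : ZMod 3) = 0 := by decide
        have h1 : p = q + 1 := by linear_combination -hd - h33
        obtain ⟨-, r, hr⟩ := hadj q
        rw [← h1, hp, hq] at hr
        exact sq_not02 r hr.symm
    refine ⟨fun t => s4 a b c t.1, isCompletion_of_full hK ?_ (fun r t => Iff.rfl) ?_⟩
    · intro t t' he
      rcases sq_collision hab hac hbc _ _ he with heq | ⟨h0, h2⟩ | ⟨h2, h0⟩
      · exact Subtype.ext heq
      · obtain ⟨p, hp⟩ := t.2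
        obtain ⟨q, hq⟩ := t'.2
        rw [h0] at hp; rw [h2] at hq
        exact absurd (hno p q hp hq) (by simp)
      · obtain ⟨p, hp⟩ := t.2
        obtain ⟨q, hq⟩ := t'.2
        rw [h2] at hp; rw [h0] at hq
        exact absurd (hno q p hq hp) (by simp)
    · intro r t t'
      refine ⟨And.left, fun hk => ⟨hk, ?_, ?_⟩⟩
      · rintro ⟨h0, h2⟩
        obtain ⟨p, hp⟩ := t.2
        obtain ⟨q, hq⟩ := t'.2
        rw [h0] at hp; rw [h2] at hq
        exact hno p q hp hq
      · rintro ⟨h2, h0⟩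
        obtain ⟨p, hp⟩ := t.2
        obtain ⟨q, hq⟩ := t'.2
        rw [h2] at hp; rw [h0] at hq
        exact hno q p hq hp
  · -- no 4-cycles at all
    exfalso
    subst hl
    have hsurj := (Finite.injective_iff_bijective.mp hinj).surjective
    obtain ⟨i0, hi0⟩ := hsurj 0
    obtain ⟨i2, hi2⟩ := hsurj 2
    rcases e4 (i2 - i0) with hd | hd | hd | hd
    · have : i2 = i0 := by linear_combination hd
      rw [this, hi0] at hi2; exact absurd hi2 (by decide)
    · have h1 : i2 = i0 + 1 := by linear_combination hd
      obtain ⟨-, r, hr⟩ := hadj i0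
      rw [← h1, hi0, hi2] at hr
      exact sq_not02 r hr
    · -- the interesting case: 0 and 2 antipodal, then 1 and 3 are adjacent, contradiction
      have hq3 : i0 + 3 = i2 + 1 := by linear_combination -hd
      have hv1ne0 : v (i0 + 1) ≠ 0 := by
        intro e
        have := hinj (e.trans hi0.symm)
        exact absurd (by linear_combination this : (1 : ZMod 4) = 0) (by decide)
      have hv1ne2 : v (i0 + 1) ≠ 2 := by
        intro e
        have := hinj (e.trans hi2.symm)
        exact absurd (by linear_combination this + hd : (1 : ZMod 4) = 2) (by decide)
      have hv3ne0 : v (i0 + 3) ≠ 0 := by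
        intro e
        have := hinj (e.trans hi0.symm)
        exact absurd (by linear_combination this : (3 : ZMod 4) = 0) (by decide)
      have hv3ne2 : v (i0 + 3) ≠ 2 := by
        intro e
        have := hinj (e.trans hi2.symm)
        exact absurd (by linear_combination this + hd : (3 : ZMod 4) = 2) (by decide)
      have hv13 : v (i0 + 1) ≠ v (i0 + 3) := by
        intro e
        have := hinj e
        exact absurd (by linear_combination -this : (2 : ZMod 4) = 0) (by decide)
      have hnadj : ¬ (sqStr K a b c).Adj (v (i0 + 1)) (v (i0 + 3)) := by
        refine hind _ _ ?_ ?_ ?_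
        · intro e; exact absurd (by linear_combination -e : (2 : ZMod 4) = 0) (by decide)
        · intro e; exact absurd (by linear_combination e : (1 : ZMod 4) = 0) (by decide)
        · intro e; exact absurd (by linear_combination -e : (3 : ZMod 4) = 0) (by decide)
      have hAdj13 : (sqStr K a b c).Adj 1 3 :=
        sq_adj hK 1 3 (by simpa using hbc) (by decide) (by decide)
      rcases e4 (v (i0 + 1)) with h | h | h | h <;> rcases e4 (v (i0 + 3)) with h' | h' | h' | h'
        <;> first
          | exact hv1ne0 h | exact hv1ne2 h | exact hv3ne0 h' | exact hv3ne2 h'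
          | exact hv13 (h.trans h'.symm)
          | (rw [h, h'] at hnadj; exact hnadj hAdj13)
          | (rw [h, h'] at hnadj; exact hnadj (adj_symm hAdj13))
    · have h33 : i0 = i2 + 1 := by linear_combination -hd - h44
      obtain ⟨-, r, hr⟩ := hadj i2
      rw [← h33, hi0, hi2] at hr
      exact sq_not02 r hr.symm

end Square

end Str
namespace Str

section Path

variable {L1 L2 W : Type} {K : Str L1 L2 W} {x y z : W}

theorem path_rel_iff (r : L2) (i j : ZMod 3) (hcl : i = 1 ∨ j = 1 ∨ i = j) :
    ((pathStr K x y z).rel r i j ↔ K.rel r (t3' x y z i) (t3' x y z j)) :=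
  and_iff_left hcl

theorem path_adj01 (hxy : K.Adj x y) : (pathStr K x y z).Adj 0 1 := by
  refine ⟨by decide, ?_⟩
  obtain ⟨r, hr⟩ := hxy.2
  rcases hr with hr | hr
  · exact ⟨r, Or.inr ⟨by simpa using hr, Or.inl rfl⟩⟩
  · exact ⟨r, Or.inl ⟨by simpa using hr, Or.inr (Or.inl rfl)⟩⟩

theorem path_adj12 (hxz : K.Adj x z) : (pathStr K x y z).Adj 1 2 := by
  refine ⟨by decide, ?_⟩
  obtain ⟨r, hr⟩ := hxz.2
  rcases hr with hr | hr
  · exact ⟨r, Or.inl ⟨by simpa using hr, Or.inl rfl⟩⟩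
  · exact ⟨r, Or.inr ⟨by simpa using hr, Or.inr (Or.inl rfl)⟩⟩

theorem path_smallEmbed (hxy : K.Adj x y) (hxz : K.Adj x z) :
    (pathStr K x y z).SmallIrredEmbed K 2 := by
  intro S _ _ hS
  have hcoll : ∀ i j : ZMod 3, (i = 1 ∨ j = 1) → i ≠ j →
      t3' x y z i ≠ t3' x y z j := by
    rintro i j (rfl | rfl) hne
    · rcases e3 j with rfl | rfl | rfl
      · simpa using hxy.1
      · exact absurd rfl hne
      · simpa using hxz.1
    · rcases e3 i with rfl | rfl | rfl
      · simpa using (Ne.symm hxy.1)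
      · exact absurd rfl hne
      · simpa using (Ne.symm hxz.1)
  refine ⟨fun t => t3' x y z t.1, ?_, fun r t => Iff.rfl, ?_⟩
  · intro t t' he
    by_contra hne
    have htne : t.1 ≠ t'.1 := fun e => hne (Subtype.ext e)
    obtain ⟨-, r, hr⟩ := hS t t' hne
    rcases hr with ⟨-, hcl⟩ | ⟨-, hcl⟩
    · rcases hcl with h1 | h1 | h1
      · exact hcoll _ _ (Or.inl h1) htne he
      · exact hcoll _ _ (Or.inr h1) htne he
      · exact htne h1
    · rcases hcl with h1 | h1 | h1
      · exact hcoll _ _ (Or.inr h1) htne he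
      · exact hcoll _ _ (Or.inl h1) htne he
      · exact htne h1.symm
  · intro r t t'
    refine ⟨And.left, fun hk => ⟨hk, ?_⟩⟩
    by_cases he : t = t'
    · exact Or.inr (Or.inr (by rw [he]))
    · obtain ⟨-, r', hr'⟩ := hS t t' he
      rcases hr' with ⟨-, hcl⟩ | ⟨-, hcl⟩
      · exact hcl
      · rcases hcl with h1 | h1 | h1
        · exact Or.inr (Or.inl h1)
        · exact Or.inl h1
        · exact Or.inr (Or.inr h1.symm)

end Path

section Duplicate

variable {L1 L2 WK : Type} {K : Str L1 L2 WK}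

theorem duplicate (hK : K.Irred) (hyp : CompletionHyp K) (x y z : WK)
    (hxy : K.Adj x y) (hxz : K.Adj x z) :
    ∃ u : ZMod 4 → WK, Function.Injective u ∧
      (∀ r k, K.unary r (u k) ↔ K.unary r (t4' x y z k)) ∧
      (∀ r k, K.rel r (u k) (u k) ↔ K.rel r (t4' x y z k) (t4' x y z k)) ∧
      (∀ r k, K.rel r (u k) (u (k + 1)) ↔ K.rel r (t4' x y z k) (t4' x y z (k + 1))) ∧
      (∀ r k, K.rel r (u (k + 1)) (u k) ↔ K.rel r (t4' x y z (k + 1)) (t4' x y z k)) := by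
  obtain ⟨g, -, hginj, hghe⟩ := hyp (ZMod 3) (pathStr K x y z)
    (fun ℓ v hcyc => absurd hcyc (path_no_cycle K x y z ℓ v)) (path_smallEmbed hxy hxz)
  -- the dictionary between pairs of path-clones and the original pairs
  have h01 := pair_transfer hghe (path_adj01 hxy)
  have h12 := pair_transfer hghe (path_adj12 hxz)
  have dyx : ∀ r, K.rel r (g 0) (g 1) ↔ K.rel r y x := fun r =>
    ((h01.2 r).1).symm.trans (by simpa using path_rel_iff (K := K) (x := x) (y := y) (z := z) r 0 1 (Or.inr (Or.inl rfl)))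
  have dxy : ∀ r, K.rel r (g 1) (g 0) ↔ K.rel r x y := fun r =>
    ((h01.2 r).2).symm.trans (by simpa using path_rel_iff (K := K) (x := x) (y := y) (z := z) r 1 0 (Or.inl rfl))
  have dxz : ∀ r, K.rel r (g 1) (g 2) ↔ K.rel r x z := fun r =>
    ((h12.2 r).1).symm.trans (by simpa using path_rel_iff (K := K) (x := x) (y := y) (z := z) r 1 2 (Or.inl rfl))
  have dzx : ∀ r, K.rel r (g 2) (g 1) ↔ K.rel r z x := fun r =>
    ((h12.2 r).2).symm.trans (by simpa using path_rel_iff (K := K) (x := x) (y := y) (z := z) r 2 1 (Or.inr (Or.inl rfl)))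
  have hs0 := single_transfer hghe (0 : ZMod 3)
  have hs1 := single_transfer hghe (1 : ZMod 3)
  have hs2 := single_transfer hghe (2 : ZMod 3)
  have duy : ∀ r, K.unary r (g 0) ↔ K.unary r y := fun r => (hs0.1 r).symm.trans (by simp [pathStr])
  have dux : ∀ r, K.unary r (g 1) ↔ K.unary r x := fun r => (hs1.1 r).symm.trans (by simp [pathStr])
  have duz : ∀ r, K.unary r (g 2) ↔ K.unary r z := fun r => (hs2.1 r).symm.trans (by simp [pathStr])
  have dly : ∀ r, K.rel r (g 0) (g 0) ↔ K.rel r y y := fun r => (hs0.2 r).symm.trans (by simpa using path_rel_iff (K := K) (x := x) (y := y) (z := z) r 0 0 (Or.inr (Or.inr rfl)))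
  have dlx : ∀ r, K.rel r (g 1) (g 1) ↔ K.rel r x x := fun r => (hs1.2 r).symm.trans (by simpa using path_rel_iff (K := K) (x := x) (y := y) (z := z) r 1 1 (Or.inl rfl))
  have dlz : ∀ r, K.rel r (g 2) (g 2) ↔ K.rel r z z := fun r => (hs2.2 r).symm.trans (by simpa using path_rel_iff (K := K) (x := x) (y := y) (z := z) r 2 2 (Or.inr (Or.inr rfl)))
  -- distinctness of the path clones
  have hab : g 1 ≠ g 0 := fun e => absurd (hginj e) (by decide)
  have hac : g 1 ≠ g 2 := fun e => absurd (hginj e) (by decide)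
  have hbc : g 0 ≠ g 2 := fun e => absurd (hginj e) (by decide)
  -- complete the square gadget
  obtain ⟨u, -, huinj, huhe⟩ := hyp (ZMod 4) (sqStr K (g 1) (g 0) (g 2))
    (sq_cycles hK hab hac hbc) (sq_smallEmbed hK hab hac hbc)
  -- pair transfer for the four edges of the square
  have medge : ∀ i j : ZMod 4, s4 (g 1) (g 0) (g 2) i ≠ s4 (g 1) (g 0) (g 2) j →
      ¬(i = 0 ∧ j = 2) → ¬(i = 2 ∧ j = 0) →
      ∀ r, (K.rel r (u i) (u j) ↔ K.rel r (s4 (g 1) (g 0) (g 2) i) (s4 (g 1) (g 0) (g 2) j)) := by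
    intro i j hne h1 h2 r
    have hA := pair_transfer huhe (sq_adj hK i j hne h1 h2)
    exact ((hA.2 r).1).symm.trans (sq_rel_iff r i j h1 h2)
  have mloop : ∀ (k : ZMod 4) r, K.rel r (u k) (u k) ↔
      K.rel r (s4 (g 1) (g 0) (g 2) k) (s4 (g 1) (g 0) (g 2) k) := by
    intro k r
    have hs := single_transfer huhe k
    refine ((hs.2 r).symm).trans (sq_rel_iff r k k ?_ ?_)
    · rintro ⟨e1, e2⟩; rw [e1] at e2; exact absurd e2 (by decide)
    · rintro ⟨e1, e2⟩; rw [e1] at e2; exact absurd e2 (by decide)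
  have mun : ∀ (k : ZMod 4) r, K.unary r (u k) ↔
      K.unary r (s4 (g 1) (g 0) (g 2) k) := by
    intro k r
    have hs := single_transfer huhe k
    exact (hs.1 r).symm
  refine ⟨u, huinj, ?_, ?_, ?_, ?_⟩
  · intro r k
    rcases e4 k with rfl | rfl | rfl | rfl <;>
      simp only [t4'_0, t4'_1, t4'_2, t4'_3] <;>
      [exact (mun 0 r).trans (by simpa using dux r);
       exact (mun 1 r).trans (by simpa using duy r);
       exact (mun 2 r).trans (by simpa using dux r);
       exact (mun 3 r).trans (by simpa using duz r)]
  · intro r k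
    rcases e4 k with rfl | rfl | rfl | rfl <;>
      simp only [t4'_0, t4'_1, t4'_2, t4'_3] <;>
      [exact (mloop 0 r).trans (by simpa using dlx r);
       exact (mloop 1 r).trans (by simpa using dly r);
       exact (mloop 2 r).trans (by simpa using dlx r);
       exact (mloop 3 r).trans (by simpa using dlz r)]
  · intro r k
    rcases e4 k with rfl | rfl | rfl | rfl
    · exact (medge 0 1 (by simpa using hab) (by decide) (by decide) r).trans
        (by simpa using dxy r)
    · have h2 : (1 : ZMod 4) + 1 = 2 := by decide
      rw [h2]
      exact (medge 1 2 (by simpa using (Ne.symm hab)) (by decide) (by decide) r).trans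
        (by simpa using dyx r)
    · have h2 : (2 : ZMod 4) + 1 = 3 := by decide
      rw [h2]
      exact (medge 2 3 (by simpa using hac) (by decide) (by decide) r).trans
        (by simpa using dxz r)
    · have h2 : (3 : ZMod 4) + 1 = 0 := by decide
      rw [h2]
      exact (medge 3 0 (by simpa using (Ne.symm hac)) (by decide) (by decide) r).trans
        (by simpa using dzx r)
  · intro r k
    rcases e4 k with rfl | rfl | rfl | rfl
    · exact (medge 1 0 (by simpa using (Ne.symm hab)) (by decide) (by decide) r).trans
        (by simpa using dyx r)
    · have h2 : (1 : ZMod 4) + 1 = 2 := by decide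
      rw [h2]
      exact (medge 2 1 (by simpa using hab) (by decide) (by decide) r).trans
        (by simpa using dxy r)
    · have h2 : (2 : ZMod 4) + 1 = 3 := by decide
      rw [h2]
      exact (medge 3 2 (by simpa using (Ne.symm hac)) (by decide) (by decide) r).trans
        (by simpa using dzx r)
    · have h2 : (3 : ZMod 4) + 1 = 0 := by decide
      rw [h2]
      exact (medge 0 3 (by simpa using hac) (by decide) (by decide) r).trans
        (by simpa using dxz r)

end Duplicate

end Str
namespace Str

section Clone

variable {L1 L2 WK : Type} {K : Str L1 L2 WK}

theorem clone_adj {p q : WK × ℕ} (hpq : (cloneStr K).Adj p q) : K.Adj p.1 q.1 := by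
  obtain ⟨hne, r, hr⟩ := hpq
  rcases hr with ⟨h, hc⟩ | ⟨h, hc⟩
  · exact ⟨hc.resolve_right hne, r, Or.inl h⟩
  · exact ⟨fun e => (hc.resolve_right (fun e2 => hne e2.symm)) e.symm, r, Or.inr h⟩

theorem clone_smallEmbed : (cloneStr K).SmallIrredEmbed K 2 := by
  intro S _ _ hS
  have hfst : ∀ t t' : S, t ≠ t' → t.1.1 ≠ t'.1.1 := by
    intro t t' hne
    obtain ⟨-, r, hr⟩ := hS t t' hne
    have hsub : t.1 ≠ t'.1 := fun e2 => hne (Subtype.ext e2)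
    rcases hr with ⟨-, hcl⟩ | ⟨-, hcl⟩
    · exact hcl.resolve_right hsub
    · exact fun e2 => (hcl.resolve_right (fun e3 => hsub e3.symm)) e2.symm
  refine ⟨fun t => t.1.1, ?_, fun r t => Iff.rfl, ?_⟩
  · intro t t' he
    by_contra hne
    exact hfst t t' hne he
  · intro r t t'
    refine ⟨And.left, fun hk => ⟨hk, ?_⟩⟩
    by_cases he : t = t'
    · exact Or.inr (by rw [he])
    · exact Or.inl (hfst t t' he)

theorem clone_cycles (hK : K.Irred) (hyp : CompletionHyp K) :
    (cloneStr K).CycleCompletes K := by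
  rintro ℓ w ⟨⟨hl3, hinj, hadj⟩, hind⟩
  haveI : NeZero ℓ := ⟨by omega⟩
  have hπ : ∀ k, (w k).1 ≠ (w (k + 1)).1 := by
    intro k
    obtain ⟨hne, r, hr⟩ := hadj k
    rcases hr with ⟨-, hcl⟩ | ⟨-, hcl⟩
    · exact hcl.resolve_right hne
    · exact fun e2 => (hcl.resolve_right (fun e3 => hne e3.symm)) e2.symm
  by_cases hcoll : ∀ k k', (w k).1 = (w k').1 → k = k'
  · -- the projection is injective: project
    refine ⟨fun t => t.1.1, isCompletion_of_full hK ?_ (fun r t => Iff.rfl) ?_⟩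
    · intro t t' he
      obtain ⟨k, hk⟩ := t.2
      obtain ⟨k', hk'⟩ := t'.2
      have he' : (w k).1 = (w k').1 := by rw [hk, hk']; exact he
      exact Subtype.ext ((hk.symm.trans (congrArg w (hcoll k k' he'))).trans hk')
    · intro r t t'
      refine ⟨And.left, fun hk2 => ⟨hk2, ?_⟩⟩
      by_cases he : t.1 = t'.1
      · exact Or.inr he
      · refine Or.inl (fun e2 => he ?_)
        obtain ⟨k, hk⟩ := t.2
        obtain ⟨k', hk'⟩ := t'.2
        have he' : (w k).1 = (w k').1 := by rw [hk, hk']; exact e2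
        exact (hk.symm.trans (congrArg w (hcoll k k' he'))).trans hk'
  · -- a collapse: necessarily ℓ = 4 and the collapse is antipodal
    push_neg at hcoll
    obtain ⟨i, j, hππ, hijne⟩ := hcoll
    have hji1 : j ≠ i + 1 := by
      intro e2
      subst e2
      exact hπ i hππ
    have hij1 : i ≠ j + 1 := by
      intro e2
      subst e2
      exact hπ j hππ.symm
    -- transfer adjacency of (i, i+1) to (i+1, j)
    have hTadj : (cloneStr K).Adj (w (i + 1)) (w j) := by
      have hne : w (i + 1) ≠ w j := fun e2 => hji1 ((hinj e2).symm)
      have hfst : (w (i + 1)).1 ≠ (w j).1 := fun e2 => hπ i (hππ.trans e2.symm)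
      obtain ⟨-, r, hr⟩ := hadj i
      rcases hr with ⟨hkr, -⟩ | ⟨hkr, -⟩
      · rw [hππ] at hkr
        exact ⟨hne, r, Or.inr ⟨hkr, Or.inl (Ne.symm hfst)⟩⟩
      · rw [hππ] at hkr
        exact ⟨hne, r, Or.inl ⟨hkr, Or.inl hfst⟩⟩
    have hj2 : j = i + 1 + 1 := by
      by_contra hne2
      exact hind (i + 1) j (Ne.symm hji1) hne2
        (fun e2 => hijne (add_right_cancel e2)) hTadj
    -- transfer adjacency of (j, j+1) to (j+1, i)
    have hTadj2 : (cloneStr K).Adj (w (j + 1)) (w i) := by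
      have hne : w (j + 1) ≠ w i := fun e2 => hij1 ((hinj e2).symm)
      have hfst : (w (j + 1)).1 ≠ (w i).1 := fun e2 => hπ j (hππ.symm.trans e2.symm)
      obtain ⟨-, r, hr⟩ := hadj j
      rcases hr with ⟨hkr, -⟩ | ⟨hkr, -⟩
      · rw [← hππ] at hkr
        exact ⟨hne, r, Or.inr ⟨hkr, Or.inl (Ne.symm hfst)⟩⟩
      · rw [← hππ] at hkr
        exact ⟨hne, r, Or.inl ⟨hkr, Or.inl hfst⟩⟩
    have hi2 : i = j + 1 + 1 := by
      by_contra hne2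
      exact hind (j + 1) i (Ne.symm hij1) hne2
        (fun e2 => hijne (add_right_cancel e2).symm) hTadj2
    -- hence 4 = 0 in ZMod ℓ, so ℓ = 4
    have h4 : ((4 : ℕ) : ZMod ℓ) = 0 := by
      push_cast
      linear_combination -hi2 - hj2
    have hdvd : ℓ ∣ 4 := (ZMod.natCast_eq_zero_iff 4 ℓ).mp h4
    have hle4 : ℓ ≤ 4 := Nat.le_of_dvd (by norm_num) hdvd
    have hl4 : ℓ = 4 := by interval_cases ℓ <;> omega
    subst hl4
    have h40 : (4 : ZMod 4) = 0 := by decide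
    have hj2' : j = i + 2 := by rw [hj2]; ring
    -- the duplication lemma applies
    have hadjxy : K.Adj (w i).1 (w (i + 1)).1 := clone_adj (hadj i)
    have hadjxz : K.Adj (w i).1 (w (i + 3)).1 := by
      have he2 : i + 3 + 1 = i := by linear_combination h40
      have := hadj (i + 3)
      rw [he2] at this
      exact adj_symm (clone_adj this)
    obtain ⟨u, huinj, huun, huloop, hue1, hue2⟩ :=
      duplicate hK hyp (w i).1 (w (i + 1)).1 (w (i + 3)).1 hadjxy hadjxz
    have hτ : ∀ d : ZMod 4, t4' (w i).1 (w (i + 1)).1 (w (i + 3)).1 d = (w (i + d)).1 := by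
      intro d
      rcases e4 d with rfl | rfl | rfl | rfl
      · rw [t4'_0, add_zero]
      · rw [t4'_1]
      · rw [t4'_2, ← hj2']
        exact hππ
      · rw [t4'_3]
    have hEdge : ∀ (r : L2) (k : ZMod 4),
        K.rel r (u (k - i)) (u (k - i + 1)) ↔ K.rel r (w k).1 (w (k + 1)).1 := by
      intro r k
      refine (hue1 r (k - i)).trans ?_
      rw [hτ (k - i), hτ (k - i + 1),
        show i + (k - i) = k from by ring, show i + (k - i + 1) = k + 1 from by ring]
    have hEdgeR : ∀ (r : L2) (k : ZMod 4),
        K.rel r (u (k - i + 1)) (u (k - i)) ↔ K.rel r (w (k + 1)).1 (w k).1 := by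
      intro r k
      refine (hue2 r (k - i)).trans ?_
      rw [hτ (k - i), hτ (k - i + 1),
        show i + (k - i) = k from by ring, show i + (k - i + 1) = k + 1 from by ring]
    have hLoopK : ∀ (r : L2) (k : ZMod 4),
        K.rel r (u (k - i)) (u (k - i)) ↔ K.rel r (w k).1 (w k).1 := by
      intro r k
      refine (huloop r (k - i)).trans ?_
      rw [hτ (k - i), show i + (k - i) = k from by ring]
    have hUn : ∀ (r : L1) (k : ZMod 4),
        K.unary r (u (k - i)) ↔ K.unary r (w k).1 := by
      intro r k
      refine (huun r (k - i)).trans ?_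
      rw [hτ (k - i), show i + (k - i) = k from by ring]
    have hFar : ∀ (k : ZMod 4) (r : L2),
        ¬ ((cloneStr K).rel r (w k) (w (k + 2)) ∨ (cloneStr K).rel r (w (k + 2)) (w k)) := by
      intro k r hr
      have hne : k ≠ k + 2 := fun e2 =>
        absurd (by linear_combination -e2 : (2 : ZMod 4) = 0) (by decide)
      refine hind k (k + 2) hne
        (fun e2 => absurd (by linear_combination e2 : (2 : ZMod 4) = 1) (by decide))
        (fun e2 => absurd (by linear_combination -e2 : (3 : ZMod 4) = 0) (by decide))
        ⟨fun e2 => hne (hinj e2), r, hr⟩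
    have consec : ∀ (r : L2) (k k' : ZMod 4),
        ((cloneStr K).rel r (w k) (w k') ∨ (cloneStr K).rel r (w k') (w k)) →
        (k = k' ∨ k' = k + 1 ∨ k = k' + 1) := by
      intro r k k' hr
      rcases e4 (k' - k) with hd | hd | hd | hd
      · exact Or.inl (by linear_combination -hd)
      · exact Or.inr (Or.inl (by linear_combination hd))
      · rw [show k' = k + 2 from by linear_combination hd] at hr
        exact absurd hr (hFar k r)
      · exact Or.inr (Or.inr (by linear_combination -hd - h40))
    have key : ∀ (r : L2) (k k' : ZMod 4), (k = k' ∨ k' = k + 1 ∨ k = k' + 1) →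
        ((cloneStr K).rel r (w k) (w k') ↔ K.rel r (u (k - i)) (u (k' - i))) := by
      rintro r k k' (hkk | hkk | hkk)
      · rw [hkk]
        exact ⟨fun hr => (hLoopK r k').mpr hr.1, fun hk2 => ⟨(hLoopK r k').mp hk2, Or.inr rfl⟩⟩
      · rw [hkk, show k + 1 - i = k - i + 1 from by ring]
        exact ⟨fun hr => (hEdge r k).mpr hr.1, fun hk2 => ⟨(hEdge r k).mp hk2, Or.inl (hπ k)⟩⟩
      · rw [hkk, show k' + 1 - i = k' - i + 1 from by ring]
        exact ⟨fun hr => (hEdgeR r k').mpr hr.1,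
          fun hk2 => ⟨(hEdgeR r k').mp hk2, Or.inl (Ne.symm (hπ k'))⟩⟩
    have keyF : ∀ (r : L2) (k k' : ZMod 4), (cloneStr K).rel r (w k) (w k') →
        K.rel r (u (k - i)) (u (k' - i)) := fun r k k' hr =>
      (key r k k' (consec r k k' (Or.inl hr))).mp hr
    -- the completion of the collapsed 4-cycle
    have hch : ∀ t : (Set.range w), w (Classical.choose t.2) = t.1 :=
      fun t => Classical.choose_spec t.2
    refine ⟨fun t => u (Classical.choose t.2 - i), hK, ?_, ⟨?_, ?_⟩, ?_⟩
    · -- injectivity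
      intro t t' he2
      have h1 := huinj he2
      have h2 : Classical.choose t.2 = Classical.choose t'.2 := by linear_combination h1
      apply Subtype.ext
      rw [← hch t, ← hch t', h2]
    · -- unary hom
      intro r t hU
      refine (hUn r (Classical.choose t.2)).mpr ?_
      rw [hch t]
      exact hU
    · -- rel hom
      intro r t t' hR
      apply keyF r (Classical.choose t.2) (Classical.choose t'.2)
      rw [hch t, hch t']
      exact hR
    · -- embeddings of irreducible substructures
      intro T hT
      refine ⟨?_, ?_, ?_⟩
      · intro a b he2
        have h1 := huinj he2
        have h2 : Classical.choose a.1.2 = Classical.choose b.1.2 := by linear_combination h1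
        apply Subtype.ext
        apply Subtype.ext
        rw [← hch a.1, ← hch b.1, h2]
      · intro r a
        have hthis := hUn r (Classical.choose a.1.2)
        rw [hch a.1] at hthis
        exact hthis.symm
      · intro r a b
        by_cases hk : (Classical.choose a.1.2 = Classical.choose b.1.2 ∨
            Classical.choose b.1.2 = Classical.choose a.1.2 + 1 ∨
            Classical.choose a.1.2 = Classical.choose b.1.2 + 1)
        · have hthis := key r (Classical.choose a.1.2) (Classical.choose b.1.2) hk
          rw [hch a.1, hch b.1] at hthis
          exact hthis
        · exfalso
          have hne : a ≠ b := fun e2 => hk (Or.inl (by rw [e2]))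
          obtain ⟨-, r', hr'⟩ := hT a b hne
          have hr'' : (cloneStr K).rel r' (w (Classical.choose a.1.2)) (w (Classical.choose b.1.2)) ∨
              (cloneStr K).rel r' (w (Classical.choose b.1.2)) (w (Classical.choose a.1.2)) := by
            rw [hch a.1, hch b.1]
            exact hr'
          exact hk (consec r' _ _ hr'')

end Clone

end Str

/-- If `K` satisfies the completion hypothesis, `h : A → B` is a homomorphism-embedding
and `B` has a completion to `K`, then `A` has a completion to `K`. -/
theorem completion_of_homEmb {L1 L2 WK : Type} [Finite L1] [Finite L2]
    [Countable WK] [Infinite WK]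
    (K : Str L1 L2 WK) (hK : K.Irred) (hyp : CompletionHyp K)
    {VA VB : Type} [Countable VA] [Countable VB]
    (A : Str L1 L2 VA) (B : Str L1 L2 VB)
    (h : VA → VB) (hh : A.IsHomEmb B h)
    (c : VB → WK) (hc : B.IsCompletion K c) :
    ∃ d : VA → WK, A.IsCompletion K d := by
  obtain ⟨e, -, heinj, hehe⟩ := hyp (WK × ℕ) (Str.cloneStr K)
    (Str.clone_cycles hK hyp) Str.clone_smallEmbed
  obtain ⟨ι, hι⟩ := exists_injective_nat VA
  set φ : VA → WK × ℕ := fun a => (c (h a), ι a) with hφ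
  have hche : B.IsHomEmb K c := hc.2.2
  have hAadj : ∀ {a a' : VA}, A.Adj a a' → B.Adj (h a) (h a') := by
    intro a a' hadj
    have hp := Str.pair_transfer hh hadj
    exact ⟨hp.1, hadj.2.imp fun r hr =>
      hr.imp (fun h1 => ((hp.2 r).1).mp h1) (fun h1 => ((hp.2 r).2).mp h1)⟩
  have hKadj : ∀ {b b' : VB}, B.Adj b b' → K.Adj (c b) (c b') := by
    intro b b' hadj
    have hp := Str.pair_transfer hche hadj
    exact ⟨hp.1, hadj.2.imp fun r hr =>
      hr.imp (fun h1 => ((hp.2 r).1).mp h1) (fun h1 => ((hp.2 r).2).mp h1)⟩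
  have hEadj : ∀ {a a' : VA}, A.Adj a a' → (Str.cloneStr K).Adj (φ a) (φ a') := by
    intro a a' hadj
    have h2 := hKadj (hAadj hadj)
    refine ⟨fun e2 => h2.1 (congrArg Prod.fst e2), ?_⟩
    obtain ⟨r, hr⟩ := h2.2
    rcases hr with hr | hr
    · exact ⟨r, Or.inl ⟨hr, Or.inl h2.1⟩⟩
    · exact ⟨r, Or.inr ⟨hr, Or.inl (Ne.symm h2.1)⟩⟩
  refine ⟨fun a => e (φ a), hK, ?_, ⟨?_, ?_⟩, ?_⟩
  · intro a a' he2
    exact hι (congrArg Prod.snd (heinj he2))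
  · intro r a ha
    exact hehe.1.1 r (φ a) (hc.2.2.1.1 r (h a) (hh.1.1 r a ha))
  · intro r a a' ha
    have h2 := hc.2.2.1.2 r (h a) (h a') (hh.1.2 r a a' ha)
    by_cases he2 : a = a'
    · subst he2
      exact hehe.1.2 r (φ a) (φ a) ⟨h2, Or.inr rfl⟩
    · have hadj : A.Adj a a' := ⟨he2, r, Or.inl ha⟩
      exact hehe.1.2 r (φ a) (φ a') ⟨h2, Or.inl (hKadj (hAadj hadj)).1⟩
  · intro S hS
    have hadjS : ∀ t t' : S, t ≠ t' → A.Adj t.1 t'.1 := by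
      intro t t' hne
      obtain ⟨-, r, hr⟩ := hS t t' hne
      exact ⟨fun e2 => hne (Subtype.ext e2), r, hr⟩
    obtain ⟨-, hunS, hrelS⟩ := hh.2 S hS
    refine ⟨?_, ?_, ?_⟩
    · intro t t' he2
      exact Subtype.ext (hι (congrArg Prod.snd (heinj he2)))
    · intro r t
      have i1 : A.unary r t.1 ↔ B.unary r (h t.1) := hunS r t
      have i2 := (Str.single_transfer hche (h t.1)).1 r
      have i3 := (Str.single_transfer hehe (φ t.1)).1 r
      exact (i1.trans i2).trans i3
    · intro r t t'
      by_cases he2 : t = t'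
      · subst he2
        have i1 : A.rel r t.1 t.1 ↔ B.rel r (h t.1) (h t.1) := hrelS r t t
        have i2 := (Str.single_transfer hche (h t.1)).2 r
        have i3 := (Str.single_transfer hehe (φ t.1)).2 r
        have i25 : K.rel r (c (h t.1)) (c (h t.1)) ↔ (Str.cloneStr K).rel r (φ t.1) (φ t.1) :=
          ⟨fun hr => ⟨hr, Or.inr rfl⟩, And.left⟩
        exact ((i1.trans i2).trans i25).trans i3
      · have hadj := hadjS t t' he2
        have hB := hAadj hadj
        have hE := hEadj hadj
        have i1 : A.rel r t.1 t'.1 ↔ B.rel r (h t.1) (h t'.1) := hrelS r t t'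
        have i2 := ((Str.pair_transfer hche hB).2 r).1
        have i3 := ((Str.pair_transfer hehe hE).2 r).1
        have hKne := (Str.pair_transfer hche hB).1
        have i25 : K.rel r (c (h t.1)) (c (h t'.1)) ↔ (Str.cloneStr K).rel r (φ t.1) (φ t'.1) :=
          ⟨fun hr => ⟨hr, Or.inl hKne⟩, And.left⟩
        exact ((i1.trans i2).trans i25).trans i3
end

section
/- Let B' be an irreducible L-structure (L a finite binary relational language) and let B'' be obtained from B' by duplicating a vertex w to a new vertex v' (v' has the same relations to all other vertices as w; w and v' are not adjacent). Then every induced cycle in B'' is isomorphic to an induced cycle already present in B'. -/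
/-- The structure obtained from `B'` by duplicating the vertex `w` to a new vertex
(`none`): the new vertex has the same unary relations as `w` and the same relations to
all other vertices, and is not adjacent to `w`. -/
def dup {L1 L2 V : Type} (B' : Str L1 L2 V) (w : V) : Str L1 L2 (Option V) where
  unary r x := B'.unary r (x.getD w)
  rel r x y :=
    match x, y with
    | some a, some b => B'.rel r a b
    | some a, none => a ≠ w ∧ B'.rel r a w
    | none, some b => b ≠ w ∧ B'.rel r w b
    | none, none => B'.rel r w w

/-!
Let `v'` be the copy of `w`. On an induced cycle through `v'`, the two cycle-neighbours of `v'`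
are distinct vertices of `B'` other than `w`, hence adjacent by irreducibility; a chord between
the two neighbours of a vertex forces the cycle to be a triangle, and that triangle misses `w`.
So no induced cycle contains both `w` and `v'`, and identifying `v'` with `w` maps it
isomorphically onto an induced cycle of `B'`.
-/

namespace Str

variable {L1 L2 V W : Type}

theorem Adj.symm {A : Str L1 L2 V} {x y : V} (h : A.Adj x y) : A.Adj y x :=
  ⟨h.1.symm, h.2.imp fun _ => Or.symm⟩

section Cycle

variable {A : Str L1 L2 V} {ℓ : ℕ} {v : ZMod ℓ → V}

theorem IsCycle.adj_pred (hv : A.IsCycle ℓ v) (i : ZMod ℓ) : A.Adj (v (i - 1)) (v i) := by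
  simpa using hv.2.2 (i - 1)

theorem IsCycle.pred_ne_succ (hv : A.IsCycle ℓ v) (i : ZMod ℓ) : v (i - 1) ≠ v (i + 1) := by
  intro h
  have h2 : ((2 : ℕ) : ZMod ℓ) = 0 := by
    push_cast
    linear_combination -hv.2.1 h
  have := Nat.le_of_dvd two_pos ((ZMod.natCast_eq_zero_iff 2 ℓ).1 h2)
  have := hv.1
  omega

theorem IsInducedCycle.eq_three_of_adj (hv : A.IsInducedCycle ℓ v) (i : ZMod ℓ)
    (h : A.Adj (v (i - 1)) (v (i + 1))) : ℓ = 3 := by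
  have hne : i + 1 ≠ i - 1 + 1 := fun e => (hv.1.2.2 i).1 (by rw [e, sub_add_cancel])
  have h3 : ((3 : ℕ) : ZMod ℓ) = 0 := by
    by_contra h3
    refine hv.2 (i - 1) (i + 1) (fun e => h.1 (congrArg v e)) hne (fun e => h3 ?_) h
    push_cast
    linear_combination -e
  have := Nat.le_of_dvd three_pos ((ZMod.natCast_eq_zero_iff 3 ℓ).1 h3)
  have := hv.1.1
  omega

theorem IsInducedCycle.of_adj_iff {B : Str L1 L2 W} {u : ZMod ℓ → W}
    (hv : A.IsInducedCycle ℓ v) (hu : Function.Injective u)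
    (h : ∀ i j, A.Adj (v i) (v j) ↔ B.Adj (u i) (u j)) : B.IsInducedCycle ℓ u :=
  ⟨⟨hv.1.1, hu, fun i => (h _ _).1 (hv.1.2.2 i)⟩,
    fun i j hij hj hi hadj => hv.2 i j hij hj hi ((h i j).2 hadj)⟩

end Cycle

end Str

theorem Option.getD_comp_injective {ι α : Type} {v : ι → Option α} {a : α}
    (hv : Function.Injective v) (h : ∀ i j, v i = none → v j ≠ some a) :
    Function.Injective fun i => (v i).getD a := by
  intro i j hij
  apply hv
  cases hi : v i <;> cases hj : v j <;> simp only [hi, hj, Option.getD_none, Option.getD_some] at hij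
  · rfl
  · exact absurd (hij ▸ hj) (h i j hi)
  · exact absurd (hij ▸ hi) (h j i hj)
  · rw [hij]

section Dup

variable {L1 L2 V : Type} {B : Str L1 L2 V} {w : V}

theorem dup_rel_iff {x y : Option V} (hxy : x.getD w = y.getD w → x = y) (r : L2) :
    (dup B w).rel r x y ↔ B.rel r (x.getD w) (y.getD w) := by
  rcases x with _ | a <;> rcases y with _ | b
  · exact Iff.rfl
  · exact ⟨And.right, And.intro fun hb => by simp [hb] at hxy⟩
  · exact ⟨And.right, And.intro fun ha => by simp [ha] at hxy⟩
  · exact Iff.rfl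

theorem dup_adj_iff {x y : Option V} (hxy : x.getD w = y.getD w → x = y) :
    (dup B w).Adj x y ↔ B.Adj (x.getD w) (y.getD w) := by
  have hyx : y.getD w = x.getD w → y = x := fun e => (hxy e.symm).symm
  simp only [Str.Adj, dup_rel_iff hxy, dup_rel_iff hyx]
  exact and_congr_left' ⟨mt hxy, mt (congrArg (Option.getD · w))⟩

theorem exists_eq_some_ne_of_dup_adj_none {x : Option V} (h : (dup B w).Adj none x) :
    ∃ a, x = some a ∧ a ≠ w := by
  obtain ⟨hx, r, hr | hr⟩ := h <;> rcases x with _ | a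
  all_goals first | exact absurd rfl hx | exact ⟨a, rfl, hr.1⟩

theorem Str.IsInducedCycle.dup_ne_some_of_eq_none (hB : B.Irred) {ℓ : ℕ}
    {v : ZMod ℓ → Option V} (hv : (dup B w).IsInducedCycle ℓ v) {i : ZMod ℓ} (hi : v i = none)
    (j : ZMod ℓ) : v j ≠ some w := by
  obtain ⟨a, ha, haw⟩ := exists_eq_some_ne_of_dup_adj_none (hi ▸ hv.1.2.2 i)
  obtain ⟨b, hb, hbw⟩ := exists_eq_some_ne_of_dup_adj_none (hi ▸ (hv.1.adj_pred i).symm)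
  have hba : b ≠ a := fun e => hv.1.pred_ne_succ i (by rw [ha, hb, e])
  have hchord : (dup B w).Adj (v (i - 1)) (v (i + 1)) := by
    rw [ha, hb, dup_adj_iff (by simp)]
    exact hB b a hba
  obtain rfl := hv.eq_three_of_adj i hchord
  have htri : ∀ i j : ZMod 3, j = i ∨ j = i + 1 ∨ j = i - 1 := by decide
  rcases htri i j with rfl | rfl | rfl <;> simp_all

end Dup

theorem dup_induced_cycle_general {L1 L2 V : Type}
    (B' : Str L1 L2 V) (hB : B'.Irred) (w : V)
    (ℓ : ℕ) (v : ZMod ℓ → Option V) (hv : (dup B' w).IsInducedCycle ℓ v) :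
    ∃ u : ZMod ℓ → V, B'.IsInducedCycle ℓ u ∧
      (∀ r i, (dup B' w).unary r (v i) ↔ B'.unary r (u i)) ∧
      (∀ r i j, (dup B' w).rel r (v i) (v j) ↔ B'.rel r (u i) (u j)) := by
  have hu : Function.Injective fun i => (v i).getD w :=
    Option.getD_comp_injective hv.1.2.1 fun _ j hi => hv.dup_ne_some_of_eq_none hB hi j
  have hvu : ∀ i j, (v i).getD w = (v j).getD w → v i = v j :=
    fun i j e => congrArg v (hu e)
  exact ⟨_, hv.of_adj_iff hu fun i j => dup_adj_iff (hvu i j), fun _ _ => Iff.rfl,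
    fun r i j => dup_rel_iff (hvu i j) r⟩

/-- Every induced cycle of the vertex-duplication of an irreducible structure `B'` is
isomorphic to an induced cycle already present in `B'`. -/
theorem dup_induced_cycle {L1 L2 V : Type} [Finite L1] [Finite L2]
    (B' : Str L1 L2 V) (hB : B'.Irred) (w : V)
    (ℓ : ℕ) (v : ZMod ℓ → Option V) (hv : (dup B' w).IsInducedCycle ℓ v) :
    ∃ u : ZMod ℓ → V, B'.IsInducedCycle ℓ u ∧
      (∀ r i, (dup B' w).unary r (v i) ↔ B'.unary r (u i)) ∧
      (∀ r i j, (dup B' w).rel r (v i) (v j) ↔ B'.rel r (u i) (u j)) :=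
  dup_induced_cycle_general B' hB w ℓ v hv
end
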